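/- arXiv:math/0701596 — 8 statements merged into one kernel-verified Lean document; each statement's English description precedes it below -/
import Mathlib

section
/- Let f ∈ k[x_0,...,x_r] be a homogeneous polynomial over a field of characteristic zero. The Hessian determinant h(f) = det(∂²f/∂x_i∂x_j) vanishes identically if and only if the partial derivatives ∂f/∂x_0, ..., ∂f/∂x_r are algebraically dependent over k. -/
/-!
Everything rests on the chain rule `∂ᵢ (P(g)) = ∑ⱼ (∂ⱼP)(g) · ∂ᵢ gⱼ`, applied to a polynomial
relation `P(g) = 0` of minimal total degree. In characteristic zero some `∂ⱼP` is nonzero, and by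
minimality no nonzero `∂ⱼP` is again a relation.

If the `gⱼ` are dependent, the vector `((∂ⱼP)(g))ⱼ` is therefore a nonzero vector in the kernel of the
Jacobian matrix `(∂ᵢ gⱼ)`. If they are independent, then, as `k[x₀, …, xᵣ]` has transcendence
degree `r + 1`, each `xᵢ` satisfies a relation with them, which must involve `xᵢ`. Differentiating it writes
`cᵢ · ∇xᵢ` with `cᵢ ≠ 0` as a combination of the `∇gⱼ`, so the Jacobian matrix times some matrix is
diagonal with nonzero entries.

The Hessian matrix of `f` is the Jacobian matrix of its gradient.
-/

open MvPolynomial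

namespace MvPolynomial

variable {R σ τ ι A : Type*}

section CommSemiring

variable [CommSemiring R]

theorem totalDegree_pderiv_lt {i : σ} {p : MvPolynomial σ R} (h : pderiv i p ≠ 0) :
    (pderiv i p).totalDegree < p.totalDegree := by
  obtain ⟨m, hm, hdeg⟩ := Finset.exists_mem_eq_sup _ (support_nonempty.mpr h)
    fun s : σ →₀ ℕ => s.sum fun _ e => e
  have hcoeff : coeff (m + Finsupp.single i 1) p ≠ 0 := by
    rw [mem_support_iff, coeff_pderiv] at hm
    exact left_ne_zero_of_mul hm
  calc (pderiv i p).totalDegree = m.sum fun _ e => e := hdeg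
    _ < (m + Finsupp.single i 1).sum fun _ e => e := by
      rw [Finsupp.sum_add_index' (fun _ => rfl) (fun _ _ _ => rfl), Finsupp.sum_single_index rfl]
      exact Nat.lt_succ_self _
    _ ≤ p.totalDegree := le_totalDegree (mem_support_iff.mpr hcoeff)

theorem pderiv_ne_zero_of_mem_vars [NoZeroDivisors R] [CharZero R] {i : σ}
    {p : MvPolynomial σ R} (h : i ∈ p.vars) : pderiv i p ≠ 0 := by
  classical
  obtain ⟨m, hm, hi⟩ := (mem_vars_iff_mem_support i).mp h
  have hle : Finsupp.single i 1 ≤ m := by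
    rw [Finsupp.single_le_iff]
    exact Nat.one_le_iff_ne_zero.mpr (Finsupp.mem_support_iff.mp hi)
  intro h0
  have hcoeff := coeff_pderiv (i := i) p (m - Finsupp.single i 1)
  rw [h0, coeff_zero, tsub_add_cancel_of_le hle] at hcoeff
  exact mul_ne_zero (mem_support_iff.mp hm) (Nat.cast_add_one_ne_zero _)
    (by exact_mod_cast hcoeff.symm)

theorem pderiv_aeval [Fintype τ] (g : τ → MvPolynomial σ R) (p : MvPolynomial τ R) (i : σ) :
    pderiv i (aeval g p) = ∑ j, aeval g (pderiv j p) * pderiv i (g j) := by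
  classical
  induction p using MvPolynomial.induction_on with
  | C a => simp
  | add p q hp hq => simp only [map_add, hp, hq, add_mul, Finset.sum_add_distrib]
  | mul_X p j hp =>
    simp only [map_mul, aeval_X, hp, Derivation.leibniz, smul_eq_mul, map_add, pderiv_X]
    simp [add_mul, Finset.sum_add_distrib, Finset.mul_sum, Pi.single_apply, mul_assoc]

noncomputable def jacobianMatrix (g : τ → MvPolynomial σ R) : Matrix σ τ (MvPolynomial σ R) :=
  .of fun i j => pderiv i (g j)

end CommSemiring

section AlgebraicIndependent

variable [CommRing R] [CommRing A] [Algebra R A]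

theorem exists_aeval_eq_zero_forall_aeval_pderiv_ne_zero {x : ι → A}
    (hx : ¬AlgebraicIndependent R x) :
    ∃ p : MvPolynomial ι R, p ≠ 0 ∧ aeval x p = 0 ∧
      ∀ j, pderiv j p ≠ 0 → aeval x (pderiv j p) ≠ 0 := by
  obtain ⟨p, ⟨hp0, hpx⟩, hmin⟩ := (measure fun p : MvPolynomial ι R => p.totalDegree).wf.has_min
    {p | p ≠ 0 ∧ aeval x p = 0} (by simpa [algebraicIndependent_iff, Set.Nonempty, and_comm] using hx)
  exact ⟨p, hp0, hpx, fun j hj hjx => hmin _ ⟨hj, hjx⟩ (totalDegree_pderiv_lt hj)⟩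

theorem _root_.AlgebraicIndependent.exists_mem_vars_notMem_range {x : ι → A} {f : τ → ι}
    (hf : f.Injective) (hx : AlgebraicIndependent R (x ∘ f)) {p : MvPolynomial ι R} (hp : p ≠ 0)
    (hpx : aeval x p = 0) : ∃ i ∈ p.vars, i ∉ Set.range f := by
  by_contra! h
  obtain ⟨q, rfl⟩ := exists_rename_eq_of_vars_subset_range p f hf h
  rw [aeval_rename] at hpx
  exact hp (by rw [hx.eq_zero_of_aeval_eq_zero q hpx, map_zero])

theorem not_algebraicIndependent_of_card_lt [IsDomain R] [Fintype σ] [Fintype ι]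
    (h : Fintype.card σ < Fintype.card ι) (x : ι → MvPolynomial σ R) :
    ¬AlgebraicIndependent R x := fun hx =>
  h.not_ge (by simpa using hx.lift_cardinalMk_le_trdeg)

end AlgebraicIndependent

theorem _root_.Matrix.det_ne_zero_of_mul_eq_diagonal {n α : Type*} [Fintype n] [DecidableEq n]
    [CommRing α] [IsDomain α] {M N : Matrix n n α} {c : n → α} (h : M * N = .diagonal c)
    (hc : ∀ i, c i ≠ 0) : M.det ≠ 0 :=
  left_ne_zero_of_mul (by
    rw [← Matrix.det_mul, h, Matrix.det_diagonal]
    exact Finset.prod_ne_zero_iff.mpr fun i _ => hc i)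

section Jacobian

variable [CommRing R] [IsDomain R] [CharZero R] [Fintype σ] {g : σ → MvPolynomial σ R}

theorem det_jacobianMatrix_eq_zero_of_not_algebraicIndependent [DecidableEq σ]
    (hg : ¬AlgebraicIndependent R g) : (jacobianMatrix g).det = 0 := by
  obtain ⟨p, hp0, hpg, hmin⟩ := exists_aeval_eq_zero_forall_aeval_pderiv_ne_zero hg
  obtain ⟨j, hj⟩ : p.vars.Nonempty := by
    rw [Finset.nonempty_iff_ne_empty, Ne, vars_eq_empty_iff_eq_C]
    intro hC
    rw [hC, aeval_C, algebraMap_eq, C_eq_zero] at hpg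
    exact hp0 (by rw [hC, hpg, map_zero])
  refine Matrix.exists_mulVec_eq_zero_iff.mp ⟨fun j => aeval g (pderiv j p),
    fun h0 => hmin j (pderiv_ne_zero_of_mem_vars hj) (congrFun h0 j), ?_⟩
  funext i
  have hchain := pderiv_aeval g p i
  rw [hpg, map_zero] at hchain
  simpa [Matrix.mulVec, dotProduct, jacobianMatrix, mul_comm] using hchain.symm

theorem exists_sum_pderiv_mul_eq_mul_pderiv_X (hg : AlgebraicIndependent R g) (i : σ) :
    ∃ c ≠ 0, ∃ b : σ → MvPolynomial σ R,
      ∀ l, ∑ j, pderiv l (g j) * b j = c * pderiv l (X i : MvPolynomial σ R) := by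
  let h : Option σ → MvPolynomial σ R := fun o => o.elim (X i) g
  obtain ⟨p, hp0, hph, hmin⟩ := exists_aeval_eq_zero_forall_aeval_pderiv_ne_zero
    (not_algebraicIndependent_of_card_lt (by simp) h)
  have hsome : AlgebraicIndependent R (h ∘ some) := hg
  obtain ⟨o, ho, hnone⟩ := hsome.exists_mem_vars_notMem_range (Option.some_injective σ) hp0 hph
  obtain rfl : o = none := Option.eq_none_iff_forall_ne_some.mpr fun j hj => hnone ⟨j, hj.symm⟩
  refine ⟨aeval h (pderiv none p), hmin none (pderiv_ne_zero_of_mem_vars ho),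
    fun j => -aeval h (pderiv (some j) p), fun l => ?_⟩
  have hchain : 0 = aeval h (pderiv none p) * pderiv l (X i) +
      ∑ j, aeval h (pderiv (some j) p) * pderiv l (g j) := by
    rw [← map_zero (pderiv l), ← hph, pderiv_aeval, Fintype.sum_option]
    rfl
  have hsum : ∑ j, pderiv l (g j) * -aeval h (pderiv (some j) p) =
      -∑ j, aeval h (pderiv (some j) p) * pderiv l (g j) := by
    rw [← Finset.sum_neg_distrib]
    exact Finset.sum_congr rfl fun j _ => by ring
  rw [hsum]
  linear_combination hchain

theorem det_jacobianMatrix_ne_zero_of_algebraicIndependent [DecidableEq σ]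
    (hg : AlgebraicIndependent R g) : (jacobianMatrix g).det ≠ 0 := by
  choose c hc b hb using exists_sum_pderiv_mul_eq_mul_pderiv_X hg
  refine Matrix.det_ne_zero_of_mul_eq_diagonal (N := .of fun j i => b i j) ?_ hc
  ext l i : 1
  simp only [Matrix.mul_apply, jacobianMatrix, Matrix.of_apply, hb, pderiv_X, Matrix.diagonal_apply]
  by_cases hli : l = i <;> simp [hli]

theorem det_jacobianMatrix_eq_zero_iff [DecidableEq σ] (g : σ → MvPolynomial σ R) :
    (jacobianMatrix g).det = 0 ↔ ¬AlgebraicIndependent R g :=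
  ⟨fun h hg => det_jacobianMatrix_ne_zero_of_algebraicIndependent hg h,
    det_jacobianMatrix_eq_zero_of_not_algebraicIndependent⟩

end Jacobian

end MvPolynomial

theorem hessian_eq_zero_iff_algebraicDependent_general {k : Type*} [Field k] [CharZero k]
    {r : ℕ} (f : MvPolynomial (Fin (r + 1)) k) :
    (Matrix.of fun i j : Fin (r + 1) =>
        MvPolynomial.pderiv i (MvPolynomial.pderiv j f)).det = 0
      ↔ ¬ AlgebraicIndependent k (fun i : Fin (r + 1) => MvPolynomial.pderiv i f) :=
  det_jacobianMatrix_eq_zero_iff fun j => pderiv j f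

/-- The Hessian determinant of a homogeneous polynomial vanishes identically
iff its partial derivatives are algebraically dependent over `k`. -/
theorem hessian_eq_zero_iff_algebraicDependent {k : Type*} [Field k] [CharZero k]
    {r d : ℕ} (f : MvPolynomial (Fin (r + 1)) k) (hf : f.IsHomogeneous d) :
    (Matrix.of fun i j : Fin (r + 1) =>
        MvPolynomial.pderiv i (MvPolynomial.pderiv j f)).det = 0
      ↔ ¬ AlgebraicIndependent k (fun i : Fin (r + 1) => MvPolynomial.pderiv i f) :=
  hessian_eq_zero_iff_algebraicDependent_general f
end

section
/- Fix integers r ≥ 3 and 1 ≤ t ≤ r-2, homogeneous forms M_0,...,M_t ∈ k[x_{t+1},...,x_r] of the same degree n-1 that are algebraically dependent over k, set Q = M_0 x_0 + ... + M_t x_t, fix d > n, μ = ⌊d/n⌋, and forms P_k ∈ k[x_{t+1},...,x_r] of degree d - kn for k = 0,...,μ. Then the Permutti polynomial f = Σ_{k=0}^{μ} Q^k P_k has identically vanishing Hessian determinant. -/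
/-!
Since the `M i` are algebraically dependent forms of one degree, they satisfy a nonzero
homogeneous relation `F(M) = 0` (a linear one when the `M i` are constants); take one of minimal
degree. In characteristic zero some `∂ᵢF` is nonzero, so by minimality `a i = (∂ᵢF)(M)` is a
nonzero vector, and Euler's identity and the chain rule give `∑ a i * M i = 0` and
`∑ a i * ∂ⱼ(M i) = 0`. As neither the `M i` nor the `P m` involve
`x₀, …, x_t`, for `i ≤ t` we have `∂ᵢf = M i * g` with `g = ∑ m Q^(m-1) P m`, hence
`∑ a i * ∂ⱼ∂ᵢf = (∑ a i * ∂ⱼ(M i)) g + (∑ a i * M i) ∂ⱼg = 0`: the Hessian has a nonzero kernel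
vector.
-/

open MvPolynomial

namespace Derivation

variable {R S A σ : Type*} [CommSemiring R] [CommSemiring S] [Algebra R S]
  [AddCommMonoid A] [Module R A] [Module S A]

theorem map_mvPolynomial_aeval [Fintype σ] (D : Derivation R S A) (g : σ → S)
    (F : MvPolynomial σ R) : D (aeval g F) = ∑ i, aeval g (pderiv i F) • D (g i) := by
  classical
  induction F using MvPolynomial.induction_on with
  | C a => simp
  | add p q hp hq => simp [hp, hq, add_smul, Finset.sum_add_distrib]
  | mul_X p l hp =>
    simp [leibniz, hp, pderiv_X, Pi.single_apply, Finset.smul_sum, mul_smul, add_smul,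
      Finset.sum_add_distrib, smul_comm (g l), apply_ite, ite_smul]

theorem map_sum_pow_mul (D : Derivation R S S) (Q : S) (P : ℕ → S) (s : Finset ℕ)
    (hP : ∀ m ∈ s, D (P m) = 0) :
    D (∑ m ∈ s, Q ^ m * P m) = D Q * ∑ m ∈ s, (m : S) * Q ^ (m - 1) * P m := by
  rw [map_sum, Finset.mul_sum]
  refine Finset.sum_congr rfl fun m hm => ?_
  rw [leibniz, leibniz_pow, hP m hm]
  simp only [smul_eq_mul, nsmul_eq_mul]
  ring

end Derivation

namespace MvPolynomial

variable {R σ ι : Type*} [CommRing R]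

section Relations

variable {M : ι → MvPolynomial σ R}

theorem homogeneousComponent_mul_aeval_of_isHomogeneous {m : ℕ} (hm : m ≠ 0)
    (hM : ∀ i, (M i).IsHomogeneous m) (F : MvPolynomial ι R) (e : ℕ) :
    homogeneousComponent (m * e) (aeval M F) = aeval M (homogeneousComponent e F) := by
  conv_lhs => rw [← sum_homogeneousComponent F, map_sum, map_sum]
  rw [Finset.sum_eq_single e]
  · exact homogeneousComponent_of_mem
      ((homogeneousComponent_isHomogeneous e F).aeval M hM) |>.trans (if_pos rfl)
  · intro e' _ he'
    rw [homogeneousComponent_of_mem ((homogeneousComponent_isHomogeneous e' F).aeval M hM),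
      if_neg (fun h => he' (Nat.eq_of_mul_eq_mul_left (Nat.pos_of_ne_zero hm) h).symm)]
  · intro he
    rw [homogeneousComponent_eq_zero e F (by simpa using he), map_zero, map_zero]

theorem exists_isHomogeneous_aeval_eq_zero_of_ne_zero {m : ℕ} (hm : m ≠ 0)
    (hM : ∀ i, (M i).IsHomogeneous m) (hdep : ¬ AlgebraicIndependent R M) :
    ∃ e, ∃ F : MvPolynomial ι R, F ≠ 0 ∧ F.IsHomogeneous e ∧ aeval M F = 0 := by
  rw [algebraicIndependent_iff] at hdep
  push Not at hdep
  obtain ⟨F, hFM, hF⟩ := hdep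
  obtain ⟨e, he⟩ : ∃ e, homogeneousComponent e F ≠ 0 := by
    by_contra! h
    exact hF (by rw [← sum_homogeneousComponent F]; simp [h])
  refine ⟨e, _, he, homogeneousComponent_isHomogeneous e F, ?_⟩
  rw [← homogeneousComponent_mul_aeval_of_isHomogeneous hm hM, hFM, map_zero]

theorem exists_isHomogeneous_aeval_eq_zero_of_isHomogeneous_zero [Nontrivial R]
    (hM : ∀ i, (M i).IsHomogeneous 0) {i₀ i₁ : ι} (hi : i₀ ≠ i₁) :
    ∃ F : MvPolynomial ι R, F ≠ 0 ∧ F.IsHomogeneous 1 ∧ aeval M F = 0 := by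
  classical
  have hC : ∀ i, M i = C (coeff 0 (M i)) := fun i =>
    totalDegree_eq_zero_iff_eq_C.mp ((totalDegree_zero_iff_isHomogeneous σ).mpr (hM i))
  by_cases h₀ : coeff 0 (M i₀) = 0
  · refine ⟨X i₀, X_ne_zero i₀, isHomogeneous_X R i₀, ?_⟩
    rw [aeval_X, hC i₀, h₀, map_zero]
  · refine ⟨C (coeff 0 (M i₁)) * X i₀ - C (coeff 0 (M i₀)) * X i₁, fun h => h₀ ?_,
      ((isHomogeneous_X R i₀).C_mul _).sub ((isHomogeneous_X R i₁).C_mul _), ?_⟩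
    · simpa [coeff_X, Finsupp.single_left_inj one_ne_zero, hi] using
        congrArg (coeff (Finsupp.single i₁ 1)) h
    · rw [map_sub, map_mul, map_mul, aeval_X, aeval_X, aeval_C, aeval_C, hC i₀, hC i₁]
      simp only [algebraMap_eq, coeff_C, if_true]
      ring

theorem exists_isHomogeneous_aeval_eq_zero [Nontrivial R] [Nontrivial ι] {m : ℕ}
    (hM : ∀ i, (M i).IsHomogeneous m) (hdep : ¬ AlgebraicIndependent R M) :
    ∃ e, ∃ F : MvPolynomial ι R, F ≠ 0 ∧ F.IsHomogeneous e ∧ aeval M F = 0 := by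
  rcases eq_or_ne m 0 with rfl | hm
  · obtain ⟨i₀, i₁, hi⟩ := exists_pair_ne ι
    exact ⟨1, exists_isHomogeneous_aeval_eq_zero_of_isHomogeneous_zero hM hi⟩
  · exact exists_isHomogeneous_aeval_eq_zero_of_ne_zero hm hM hdep

variable [IsDomain R] [CharZero R]

theorem IsHomogeneous.exists_pderiv_ne_zero [Fintype ι] {F : MvPolynomial ι R} {e : ℕ}
    (hF : F.IsHomogeneous e) (he : e ≠ 0) (hF0 : F ≠ 0) : ∃ i, pderiv i F ≠ 0 := by
  by_contra! h
  have := hF.sum_X_mul_pderiv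
  simp only [h, mul_zero, Finset.sum_const_zero] at this
  exact smul_ne_zero he hF0 this.symm

theorem exists_syzygy_of_isHomogeneous_aeval_eq_zero [Fintype ι]
    (h : ∃ e, ∃ F : MvPolynomial ι R, F ≠ 0 ∧ F.IsHomogeneous e ∧ aeval M F = 0) :
    ∃ a : ι → MvPolynomial σ R, a ≠ 0 ∧ ∑ i, a i * M i = 0 ∧
      ∀ j, ∑ i, a i * pderiv j (M i) = 0 := by
  classical
  obtain ⟨F, hF0, hF, hFM⟩ := Nat.find_spec h
  set e := Nat.find h
  have he : e ≠ 0 := by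
    rintro he
    rw [he, ← totalDegree_zero_iff_isHomogeneous, totalDegree_eq_zero_iff_eq_C] at hF
    rw [hF, aeval_C, algebraMap_eq, C_eq_zero] at hFM
    exact hF0 (by rw [hF, hFM, map_zero])
  obtain ⟨i₀, hi₀⟩ := hF.exists_pderiv_ne_zero he hF0
  have hmin : aeval M (pderiv i₀ F) ≠ 0 := fun hz =>
    Nat.find_min h (Nat.sub_one_lt he) ⟨_, hi₀, hF.pderiv, hz⟩
  refine ⟨fun i => aeval M (pderiv i F), fun ha => hmin (congrFun ha i₀), ?_, fun j => ?_⟩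
  · have euler := congrArg (aeval M) hF.sum_X_mul_pderiv
    rw [map_nsmul, hFM, smul_zero, map_sum] at euler
    simpa only [map_mul, aeval_X, mul_comm] using euler
  · have chain := (pderiv j).map_mvPolynomial_aeval M F
    rw [hFM, map_zero] at chain
    exact chain.symm

end Relations

noncomputable def hessian (f : MvPolynomial σ R) : Matrix σ σ (MvPolynomial σ R) :=
  Matrix.of fun i j => pderiv i (pderiv j f)

theorem det_hessian_eq_zero_of_pderiv_eq_mul [IsDomain R] [Fintype σ] [DecidableEq σ]
    [Fintype ι] {f g : MvPolynomial σ R} {M a : ι → MvPolynomial σ R} {e : ι → σ}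
    (he : Function.Injective e) (hf : ∀ i, pderiv (e i) f = M i * g) (ha : a ≠ 0)
    (hM : ∑ i, a i * M i = 0) (hdM : ∀ j, ∑ i, a i * pderiv j (M i) = 0) :
    (hessian f).det = 0 := by
  rw [← Matrix.exists_mulVec_eq_zero_iff]
  refine ⟨Function.extend e a 0, fun h => ha ?_, ?_⟩
  · funext i
    rw [← he.extend_apply a 0 i, h, Pi.zero_apply, Pi.zero_apply]
  · funext j
    calc (hessian f).mulVec (Function.extend e a 0) j
        = ∑ l, hessian f j l * Function.extend e a 0 l := rfl
      _ = ∑ i, pderiv j (M i * g) * a i := by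
          refine (Fintype.sum_of_injective e he _ _ (fun l hl => ?_) fun i => ?_).symm
          · rw [Function.extend_apply' _ _ _ (by simpa using hl), Pi.zero_apply, mul_zero]
          · rw [he.extend_apply, ← hf]
            rfl
      _ = (∑ i, a i * pderiv j (M i)) * g + (∑ i, a i * M i) * pderiv j g := by
          simp only [Derivation.leibniz, smul_eq_mul, Finset.sum_mul, ← Finset.sum_add_distrib]
          exact Finset.sum_congr rfl fun i _ => by ring
      _ = 0 := by rw [hdM, hM, zero_mul, zero_mul, add_zero]

theorem pderiv_sum_mul_X {s : Finset σ} {M : σ → MvPolynomial σ R} {i : σ} (hi : i ∈ s)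
    (hM : ∀ l ∈ s, pderiv i (M l) = 0) : pderiv i (∑ l ∈ s, M l * X l) = M i := by
  classical
  calc pderiv i (∑ l ∈ s, M l * X l) = ∑ l ∈ s, M l * pderiv i (X l) := by
        rw [map_sum]
        exact Finset.sum_congr rfl fun l hl => by rw [pderiv_mul, hM l hl, zero_mul, zero_add]
    _ = M i := by simp [pderiv_X, Pi.single_apply, hi]

end MvPolynomial

theorem permutti_vanishing_hessian_general {k : Type*} [Field k] [CharZero k]
    {r t n d : ℕ} (hr : 3 ≤ r) (ht1 : 1 ≤ t)
    (M : Fin (r + 1) → MvPolynomial (Fin (r + 1)) k)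
    (hMhom : ∀ i : Fin (r + 1), (i : ℕ) ≤ t → (M i).IsHomogeneous (n - 1))
    (hMvars : ∀ i : Fin (r + 1), (i : ℕ) ≤ t → ∀ j ∈ (M i).vars, t < (j : ℕ))
    (hMdep : ¬ AlgebraicIndependent k (fun i : {i : Fin (r + 1) // (i : ℕ) ≤ t} => M i.1))
    (P : ℕ → MvPolynomial (Fin (r + 1)) k)
    (hPvars : ∀ m, m ≤ d / n → ∀ j ∈ (P m).vars, t < (j : ℕ)) :
    (Matrix.of fun i j : Fin (r + 1) =>
        MvPolynomial.pderiv i (MvPolynomial.pderiv j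
          (∑ m ∈ Finset.range (d / n + 1),
            (∑ i ∈ Finset.univ.filter (fun i : Fin (r + 1) => (i : ℕ) ≤ t),
              M i * MvPolynomial.X i) ^ m * P m))).det = 0 := by
  have : Nontrivial {i : Fin (r + 1) // (i : ℕ) ≤ t} :=
    ⟨⟨⟨0, by omega⟩, Nat.zero_le t⟩, ⟨⟨1, by omega⟩, ht1⟩, by simp [Subtype.ext_iff, Fin.ext_iff]⟩
  obtain ⟨a, ha, hM, hdM⟩ := exists_syzygy_of_isHomogeneous_aeval_eq_zero
    (exists_isHomogeneous_aeval_eq_zero (M := fun i : {i : Fin (r + 1) // (i : ℕ) ≤ t} => M i)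
      (fun i => hMhom i.1 i.2) hMdep)
  have pderiv_eq_zero_of_lt_vars : ∀ p : MvPolynomial (Fin (r + 1)) k,
      (∀ j ∈ p.vars, t < (j : ℕ)) → ∀ i : Fin (r + 1), (i : ℕ) ≤ t → pderiv i p = 0 :=
    fun p hp i hi => pderiv_eq_zero_of_notMem_vars fun hmem => (hp i hmem).not_ge hi
  exact det_hessian_eq_zero_of_pderiv_eq_mul Subtype.val_injective (fun i => by
    rw [Derivation.map_sum_pow_mul _ _ _ _ fun m hm => pderiv_eq_zero_of_lt_vars _
        (hPvars m (Nat.lt_succ_iff.mp (Finset.mem_range.mp hm))) i.1 i.2,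
      pderiv_sum_mul_X (by simpa using i.2) fun l hl =>
        pderiv_eq_zero_of_lt_vars _ (hMvars l (by simpa using hl)) i.1 i.2]) ha hM hdM

/-- Every Permutti polynomial `f = Σ_{m=0}^{μ} Q^m P_m`, with
`Q = Σ_{i=0}^{t} M_i x_i`, the `M_i` algebraically dependent forms of degree `n-1`
in the variables `x_{t+1},…,x_r`, and `P_m` forms of degree `d - m n` in those same
variables, has identically vanishing Hessian determinant. -/
theorem permutti_vanishing_hessian {k : Type*} [Field k] [CharZero k]
    {r t n d : ℕ} (hr : 3 ≤ r) (ht1 : 1 ≤ t) (ht2 : t ≤ r - 2) (hn : 1 ≤ n) (hd : n < d)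
    (M : Fin (r + 1) → MvPolynomial (Fin (r + 1)) k)
    (hMhom : ∀ i : Fin (r + 1), (i : ℕ) ≤ t → (M i).IsHomogeneous (n - 1))
    (hMvars : ∀ i : Fin (r + 1), (i : ℕ) ≤ t → ∀ j ∈ (M i).vars, t < (j : ℕ))
    (hMdep : ¬ AlgebraicIndependent k (fun i : {i : Fin (r + 1) // (i : ℕ) ≤ t} => M i.1))
    (P : ℕ → MvPolynomial (Fin (r + 1)) k)
    (hPhom : ∀ m, m ≤ d / n → (P m).IsHomogeneous (d - m * n))
    (hPvars : ∀ m, m ≤ d / n → ∀ j ∈ (P m).vars, t < (j : ℕ)) :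
    (Matrix.of fun i j : Fin (r + 1) =>
        MvPolynomial.pderiv i (MvPolynomial.pderiv j
          (∑ m ∈ Finset.range (d / n + 1),
            (∑ i ∈ Finset.univ.filter (fun i : Fin (r + 1) => (i : ℕ) ≤ t),
              M i * MvPolynomial.X i) ^ m * P m))).det = 0 :=
  permutti_vanishing_hessian_general hr ht1 M hMhom hMvars hMdep P hPvars
end

section
/- Let f^{(r)} be the determinant of the r×r sub-Hankel matrix in x_0,...,x_r (entry (i,j) equal to x_{i+j} if i+j ≤ r, else 0), with r ≥ 2. Then for 0 ≤ i ≤ r-1, the partial derivatives ∂f^{(r)}/∂x_0, ..., ∂f^{(r)}/∂x_i lie in the subring k[x_{r-i},...,x_r], and their greatest common divisor is x_r^{r-i-1}. -/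
open MvPolynomial

/-- The `r × r` generic sub-Hankel matrix in the variables `x_0,…,x_r`:
entry `(i,j)` is `x_{i+j}` if `i + j ≤ r` and `0` otherwise. -/
noncomputable def subHankel (k : Type*) [CommRing k] (r : ℕ) :
    Matrix (Fin r) (Fin r) (MvPolynomial (Fin (r + 1)) k) :=
  Matrix.of fun i j =>
    if h : (i : ℕ) + (j : ℕ) ≤ r then MvPolynomial.X ⟨(i : ℕ) + (j : ℕ), Nat.lt_succ_of_le h⟩
    else 0

/-- The sub-Hankel determinant `f^{(r)}`. -/
noncomputable def subHankelDet (k : Type*) [CommRing k] (r : ℕ) :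
    MvPolynomial (Fin (r + 1)) k :=
  (subHankel k r).det

/-!
Every Leibniz term of `f^{(r)}` is a monomial `∏ₐ x_{σ(a)+a}`. Hence `f^{(r)}` is homogeneous of
degree `r`, and also of weight `r` when `x_t` is given the weight `r - t` (entry `(a, b)` has weight
`(r - a) - b`, and `∑ₐ (r - a) - ∑_b b = r² - r(r - 1)`). So every monomial of `∂f/∂x_j` has degree
`r - 1` and weight `j`: a variable `x_t` occurring in it has `r - t ≤ j`, and at most `j` of its
factors differ from `x_r`, so `x_r^{r-1-j}` divides `∂f/∂x_j`.

For the gcd, weight `0` forces `∂f/∂x_0 = c x_r^{r-1}`, so a common divisor is associated to a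
power of `x_r`; and `∂f/∂x_i` contains `x_{r-1}^i x_r^{r-1-i}` with a nonzero coefficient. Indeed,
after reversing the rows, the permutations producing `x_i x_{r-1}^i x_r^{r-1-i}` in `f^{(r)}` are
exactly the inverses of the `i + 1` cycles `(a a+1 … a+r-1-i)`, which all have the same sign.
-/

open Finset Equiv

theorem Matrix.isWeightedHomogeneous_det {ι σ R M : Type*} [Fintype ι] [DecidableEq ι]
    [CommRing R] [AddCommMonoid M] {w : σ → M} (A : Matrix ι ι (MvPolynomial σ R))
    (u v : ι → M) (hA : ∀ a b, (A a b).IsWeightedHomogeneous w (u a + v b)) :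
    A.det.IsWeightedHomogeneous w (∑ a, u a + ∑ b, v b) := by
  rw [Matrix.det_apply]
  refine IsWeightedHomogeneous.sum _ _ _ fun τ _ => ?_
  have hprod := IsWeightedHomogeneous.prod univ (fun b => A (τ b) b)
    (fun b => u (τ b) + v b) fun b _ => hA (τ b) b
  rw [sum_add_distrib, Equiv.sum_comp τ u] at hprod
  rcases Int.units_eq_one_or (Equiv.Perm.sign τ) with h | h <;> rw [h]
  · simpa using hprod
  · simpa using hprod.neg

namespace MvPolynomial

variable {σ R : Type*} [CommSemiring R]

theorem isWeightedHomogeneous_natCast_iff {w : σ → ℕ} {φ : MvPolynomial σ R} {n : ℕ} :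
    φ.IsWeightedHomogeneous (fun s => (w s : ℤ)) n ↔ φ.IsWeightedHomogeneous w n := by
  have hcast (d : σ →₀ ℕ) : Finsupp.weight (fun s => (w s : ℤ)) d = Finsupp.weight w d := by
    simp [Finsupp.weight_apply, Finsupp.sum]
  simp only [IsWeightedHomogeneous, hcast, Nat.cast_inj]

theorem monomial_one_dvd_iff {s : σ →₀ ℕ} {p : MvPolynomial σ R} :
    monomial s 1 ∣ p ↔ ∀ m ∈ p.support, s ≤ m := by
  rw [monomial_one_dvd_iff_modMonomial_eq_zero, MvPolynomial.ext_iff]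
  refine forall_congr' fun m => ?_
  by_cases hsm : s ≤ m
  · simp [coeff_modMonomial_of_le _ hsm, hsm]
  · simp [coeff_modMonomial_of_not_le _ hsm, hsm]

theorem X_pow_dvd_iff {t : σ} {e : ℕ} {p : MvPolynomial σ R} :
    X t ^ e ∣ p ↔ ∀ m ∈ p.support, e ≤ m t := by
  simp [X_pow_eq_monomial, monomial_one_dvd_iff, Finsupp.single_le_iff]

end MvPolynomial

theorem Finsupp.degree_le_apply_add_weight {σ : Type*} [Fintype σ] {w : σ → ℕ} {s₀ : σ}
    (hw : ∀ s ≠ s₀, 1 ≤ w s) (m : σ →₀ ℕ) : m.degree ≤ m s₀ + weight w m := by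
  classical
  rw [degree_eq_sum, weight_eq_sum, ← Finset.add_sum_erase _ _ (mem_univ s₀),
    ← Finset.add_sum_erase _ _ (mem_univ s₀), ← add_assoc]
  gcongr with s hs
  · exact le_self_add
  · exact Nat.le_mul_of_pos_right _ (hw s (ne_of_mem_erase hs))

theorem Fin.sum_intCast_val_mul_two (r : ℕ) : (∑ a : Fin r, (a : ℤ)) * 2 = r * (r - 1) := by
  rw [Fin.sum_univ_eq_sum_range (fun a => (a : ℤ)) r]
  induction r with
  | zero => simp
  | succ r ih => rw [sum_range_succ, add_mul, ih]; push_cast; ring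

/-- The points moved by `π`, together with `a`, form the interval `[a, b]`: the maximum of this
set can only be reached from `a`, and its minimum can only be left towards a smaller point. -/
theorem Fin.insert_filter_apply_add_one_eq_Icc {m : ℕ} {π : Perm (Fin m)} {a b : Fin m}
    (hab : a ≤ b) (ha : π a = b) (hπ : ∀ x ≠ a, π x = x ∨ (π x : ℕ) + 1 = x)
    (hcard : #{x | (π x : ℕ) + 1 = x} = b - a) :
    insert a ({x | (π x : ℕ) + 1 = x} : Finset (Fin m)) = Icc a b := by
  set D : Finset (Fin m) := {x | (π x : ℕ) + 1 = x}
  have haD : a ∉ D := by simp [D, ha]; omega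
  have hfix (x) (hx : x ∉ insert a D) : π x = x := by
    simp only [mem_insert, not_or, D, mem_filter, mem_univ, true_and] at hx
    exact (hπ x hx.1).resolve_right hx.2
  have hupper : ∀ x ∈ insert a D, x ≤ b := by
    obtain ⟨M, hMT, hM⟩ := (insert a D).exists_max_image id ⟨a, mem_insert_self a D⟩
    suffices M ≤ b from fun x hx => (hM x hx).trans this
    obtain ⟨y, rfl⟩ := π.surjective M
    by_cases hya : y = a
    · rw [hya, ha]
    by_cases hyT : y ∈ insert a D
    · have := Fin.le_def.mp (hM y hyT)
      simp only [mem_insert, hya, false_or, D, mem_filter, mem_univ, true_and] at hyT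
      simp only [id] at this
      omega
    · exact absurd (hfix y hyT ▸ hMT) hyT
  have hlower : ∀ x ∈ insert a D, a ≤ x := by
    obtain ⟨y, hyT, hy⟩ := (insert a D).exists_min_image id ⟨a, mem_insert_self a D⟩
    suffices a ≤ y from fun x hx => this.trans (hy x hx)
    rcases mem_insert.mp hyT with rfl | hyD
    · exact le_rfl
    have hπy : (π y : ℕ) + 1 = y := (mem_filter.mp hyD).2
    have hπyT : π y ∈ insert a D := by
      by_contra h
      have := congrArg Fin.val (π.injective (hfix _ h))
      omega
    have := Fin.le_def.mp (hy _ hπyT)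
    simp only [id] at this
    omega
  refine eq_of_subset_of_card_le (fun x hx => mem_Icc.mpr ⟨hlower x hx, hupper x hx⟩) ?_
  rw [card_insert_of_notMem haD, hcard, Fin.card_Icc]
  omega

theorem Fin.eq_cycleIcc_symm {m : ℕ} [NeZero m] {π : Perm (Fin m)} {a b : Fin m} (hab : a ≤ b)
    (ha : π a = b) (hπ : ∀ x ≠ a, π x = x ∨ (π x : ℕ) + 1 = x)
    (hcard : #{x | (π x : ℕ) + 1 = x} = b - a) : π = (cycleIcc a b).symm := by
  have hT := Fin.insert_filter_apply_add_one_eq_Icc hab ha hπ hcard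
  refine Equiv.ext fun x => Equiv.eq_symm_apply _ |>.mpr ?_
  by_cases hxa : x = a
  · rw [hxa, ha, cycleIcc_of_last hab]
  by_cases hxT : x ∈ Icc a b
  · have hπx : (π x : ℕ) + 1 = x := by
      rw [← hT, mem_insert, mem_filter] at hxT
      exact (hxT.resolve_left hxa).2
    have hxb := Fin.le_def.mp (mem_Icc.mp hxT).2
    have hax := Fin.lt_def.mp (lt_of_le_of_ne (mem_Icc.mp hxT).1 (Ne.symm hxa))
    rw [cycleIcc_of_ge_of_lt (Fin.le_def.mpr (by omega)) (Fin.lt_def.mpr (by omega))]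
    ext
    rw [Fin.val_add_one_of_lt' (by omega)]
    omega
  · have hπx : π x = x := by
      refine (hπ x hxa).resolve_right fun h => hxT ?_
      rw [← hT]
      exact mem_insert_of_mem (mem_filter.mpr ⟨mem_univ x, h⟩)
    rw [hπx]
    rw [mem_Icc, not_and_or, not_le, not_le] at hxT
    rcases hxT with hxa | hbx
    · exact cycleIcc_of_lt hxa
    · exact cycleIcc_of_gt hbx

section SubHankelGrading

variable {k : Type*} [CommRing k] {r : ℕ}

def subHankelWeight (r : ℕ) (t : Fin (r + 1)) : ℕ := r - t

theorem isWeightedHomogeneous_subHankel_apply {M : Type*} [AddCommMonoid M]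
    {w : Fin (r + 1) → M} {u v : Fin r → M}
    (hw : ∀ a b : Fin r, ∀ h : (a : ℕ) + b ≤ r, w ⟨a + b, Nat.lt_succ_of_le h⟩ = u a + v b)
    (a b : Fin r) : (subHankel k r a b).IsWeightedHomogeneous w (u a + v b) := by
  rw [subHankel, Matrix.of_apply]
  split_ifs with h
  · simpa [hw a b h] using isWeightedHomogeneous_X k w ⟨a + b, Nat.lt_succ_of_le h⟩
  · simpa using isWeightedHomogeneous_zero k w (u a + v b)

theorem isHomogeneous_subHankelDet : (subHankelDet k r).IsHomogeneous r := by
  have h := (subHankel k r).isWeightedHomogeneous_det (w := 1) (fun _ => 1) (fun _ => 0)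
    (isWeightedHomogeneous_subHankel_apply fun _ _ _ => rfl)
  simpa [subHankelDet, IsHomogeneous] using h

theorem isWeightedHomogeneous_subHankelDet :
    (subHankelDet k r).IsWeightedHomogeneous (subHankelWeight r) r := by
  rw [← isWeightedHomogeneous_natCast_iff]
  have h := (subHankel k r).isWeightedHomogeneous_det
    (w := fun t => (subHankelWeight r t : ℤ)) (fun a => (r : ℤ) - a) (fun b => -(b : ℤ))
    (isWeightedHomogeneous_subHankel_apply fun a b h => by
      rw [subHankelWeight, Nat.cast_sub h]
      push_cast; ring)
  convert h using 1
  · rfl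
  have := Fin.sum_intCast_val_mul_two r
  rw [sum_sub_distrib, sum_neg_distrib]
  simp only [sum_const, card_univ, Fintype.card_fin, nsmul_eq_mul]
  linarith

end SubHankelGrading

section PartialDerivatives

variable {k : Type*} [CommRing k] {r : ℕ}

theorem isWeightedHomogeneous_pderiv_subHankelDet (j : Fin (r + 1)) :
    (pderiv j (subHankelDet k r)).IsWeightedHomogeneous (subHankelWeight r) j :=
  isWeightedHomogeneous_subHankelDet.pderiv (by simp only [subHankelWeight]; omega)

theorem degree_of_mem_support_pderiv_subHankelDet {j : Fin (r + 1)} {d : Fin (r + 1) →₀ ℕ}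
    (hd : d ∈ (pderiv j (subHankelDet k r)).support) : d.degree = r - 1 := by
  rw [Finsupp.degree_eq_weight_one]
  exact isHomogeneous_subHankelDet.pderiv (mem_support_iff.mp hd)

theorem weight_of_mem_support_pderiv_subHankelDet {j : Fin (r + 1)} {d : Fin (r + 1) →₀ ℕ}
    (hd : d ∈ (pderiv j (subHankelDet k r)).support) :
    Finsupp.weight (subHankelWeight r) d = j :=
  isWeightedHomogeneous_pderiv_subHankelDet j (mem_support_iff.mp hd)

theorem sub_le_of_mem_vars_pderiv_subHankelDet {j t : Fin (r + 1)}
    (ht : t ∈ (pderiv j (subHankelDet k r)).vars) : r - j ≤ t := by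
  obtain ⟨d, hd, hdt⟩ := (mem_vars_iff_mem_support t).mp ht
  have := Finsupp.le_weight_of_ne_zero' (subHankelWeight r) (Finsupp.mem_support_iff.mp hdt)
  rw [weight_of_mem_support_pderiv_subHankelDet hd, subHankelWeight] at this
  omega

theorem sub_le_apply_last_of_mem_support_pderiv_subHankelDet {j : Fin (r + 1)}
    {d : Fin (r + 1) →₀ ℕ} (hd : d ∈ (pderiv j (subHankelDet k r)).support) :
    r - 1 - j ≤ d (Fin.last r) := by
  have := Finsupp.degree_le_apply_add_weight (w := subHankelWeight r) (s₀ := Fin.last r)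
    (fun t ht => by simp only [subHankelWeight]; have := Fin.val_lt_last ht; omega) d
  rw [degree_of_mem_support_pderiv_subHankelDet hd,
    weight_of_mem_support_pderiv_subHankelDet hd] at this
  omega

theorem X_last_pow_dvd_pderiv_subHankelDet (j : Fin (r + 1)) :
    X (Fin.last r) ^ (r - 1 - j) ∣ pderiv j (subHankelDet k r) :=
  X_pow_dvd_iff.mpr fun _ hd => sub_le_apply_last_of_mem_support_pderiv_subHankelDet hd

theorem pderiv_zero_subHankelDet :
    pderiv 0 (subHankelDet k r) = monomial (Finsupp.single (Fin.last r) (r - 1))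
      (coeff (Finsupp.single (Fin.last r) (r - 1)) (pderiv 0 (subHankelDet k r))) := by
  refine eq_monomial_of_support_subset_singleton fun d hd => ?_
  have hlast : r - 1 ≤ d (Fin.last r) := by
    simpa using sub_le_apply_last_of_mem_support_pderiv_subHankelDet hd
  have hweight : Finsupp.weight (subHankelWeight r) d = 0 := by
    simpa using weight_of_mem_support_pderiv_subHankelDet hd
  ext t
  by_cases ht : t = Fin.last r
  · subst ht
    have := Finsupp.le_degree (Fin.last r) d
    rw [degree_of_mem_support_pderiv_subHankelDet hd] at this
    rw [Finsupp.single_eq_same]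
    omega
  · have := Finsupp.le_weight (subHankelWeight r)
      (by simp only [subHankelWeight]; have := Fin.val_lt_last ht; omega) d (s := t)
    rw [Finsupp.single_eq_of_ne ht]
    omega

end PartialDerivatives

section LeibnizExpansion

variable {k : Type*} [CommRing k] {r : ℕ}

def IsSubHankelAdmissible (σ : Perm (Fin r)) : Prop := ∀ x, (σ x : ℕ) + x ≤ r

/-- The truncation at `r` only matters for permutations that are not admissible, whose
Leibniz term vanishes. -/
def subHankelIndex (σ : Perm (Fin r)) (x : Fin r) : Fin (r + 1) :=
  ⟨min (σ x + x) r, Nat.lt_succ_of_le (min_le_right _ _)⟩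

noncomputable def subHankelExponent (σ : Perm (Fin r)) : Fin (r + 1) →₀ ℕ :=
  ∑ x, Finsupp.single (subHankelIndex σ x) 1

theorem prod_subHankel_of_admissible {σ : Perm (Fin r)} (hσ : IsSubHankelAdmissible σ) :
    ∏ x, subHankel k r (σ x) x = monomial (subHankelExponent σ) 1 := by
  rw [subHankelExponent, monomial_sum_one]
  refine prod_congr rfl fun x _ => ?_
  rw [subHankel, Matrix.of_apply, dif_pos (hσ x), ← X]
  congr
  exact (min_eq_left (hσ x)).symm

theorem prod_subHankel_of_not_admissible {σ : Perm (Fin r)} (hσ : ¬IsSubHankelAdmissible σ) :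
    ∏ x, subHankel k r (σ x) x = 0 := by
  obtain ⟨x, hx⟩ := not_forall.mp hσ
  exact prod_eq_zero (mem_univ x) (by rw [subHankel, Matrix.of_apply, dif_neg hx])

open Classical in
theorem coeff_subHankelDet (ν : Fin (r + 1) →₀ ℕ) :
    coeff ν (subHankelDet k r) =
      ∑ σ ∈ {σ : Perm (Fin r) | IsSubHankelAdmissible σ ∧ subHankelExponent σ = ν},
        (Perm.sign σ : k) := by
  rw [subHankelDet, Matrix.det_apply, coeff_sum, sum_filter]
  refine sum_congr rfl fun σ _ => ?_
  rw [coeff_smul]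
  by_cases hσ : IsSubHankelAdmissible σ
  · rw [prod_subHankel_of_admissible hσ, coeff_monomial]
    by_cases hν : subHankelExponent σ = ν <;> simp [hσ, hν, Units.smul_def]
  · simp [prod_subHankel_of_not_admissible hσ, hσ]

theorem subHankelExponent_apply_of_admissible {σ : Perm (Fin r)}
    (hσ : IsSubHankelAdmissible σ) (t : Fin (r + 1)) :
    subHankelExponent σ t = #{x | (σ x : ℕ) + x = t} := by
  classical
  rw [subHankelExponent, Finsupp.finsetSum_apply, card_filter]
  refine sum_congr rfl fun x _ => ?_
  simp [Finsupp.single_apply, subHankelIndex, Fin.ext_iff, min_eq_left (hσ x)]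

end LeibnizExpansion

section GcdWitness

variable {k : Type*} [CommRing k] {n : ℕ} (s : Fin (n + 1))

noncomputable def gcdWitnessExponent : Fin (n + 1 + 1) →₀ ℕ :=
  Finsupp.single (Fin.last n).castSucc (s : ℕ) + Finsupp.single (Fin.last (n + 1)) (n - s)

theorem single_add_gcdWitnessExponent_apply (c : ℕ) (hc : c < n + 1 + 1) :
    (Finsupp.single s.castSucc 1 + gcdWitnessExponent s : Fin (n + 1 + 1) →₀ ℕ) ⟨c, hc⟩ =
      (if c = s then 1 else 0) + (if c = n then (s : ℕ) else 0) +
        (if c = n + 1 then n - s else 0) := by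
  simp only [gcdWitnessExponent, Finsupp.add_apply, Finsupp.single_apply, Fin.ext_iff,
    Fin.val_castSucc, Fin.val_last, eq_comm (b := c), add_assoc]

theorem card_filter_of_subHankelExponent_eq {σ : Perm (Fin (n + 1))}
    (hσ : IsSubHankelAdmissible σ)
    (he : subHankelExponent σ = Finsupp.single s.castSucc 1 + gcdWitnessExponent s)
    (c : ℕ) (hc : c < n + 1 + 1) :
    #{x | (σ x : ℕ) + x = c} = (if c = s then 1 else 0) + (if c = n then (s : ℕ) else 0) +
      (if c = n + 1 then n - s else 0) := by
  rw [← single_add_gcdWitnessExponent_apply s c hc, ← he,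
    subHankelExponent_apply_of_admissible hσ]

theorem sign_eq_of_subHankelExponent_eq {σ : Perm (Fin (n + 1))}
    (hσ : IsSubHankelAdmissible σ)
    (he : subHankelExponent σ = Finsupp.single s.castSucc 1 + gcdWitnessExponent s) :
    Perm.sign σ = (-1) ^ (n - s : ℕ) * Perm.sign (Fin.revPerm : Perm (Fin (n + 1))) := by
  have hcount := card_filter_of_subHankelExponent_eq s hσ he
  have hval (x : Fin (n + 1)) :
      (σ x : ℕ) + x = s ∨ (σ x : ℕ) + x = n ∨ (σ x : ℕ) + x = n + 1 := by
    by_contra! h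
    have := hcount _ (Nat.lt_succ_of_le (hσ x))
    rw [if_neg h.1, if_neg h.2.1, if_neg h.2.2, card_eq_zero] at this
    exact notMem_empty x (this ▸ mem_filter.mpr ⟨mem_univ x, rfl⟩)
  obtain ⟨a, ha⟩ : ∃ a, (σ a : ℕ) + a = s := by
    have := hcount s (by omega)
    rw [if_pos rfl] at this
    obtain ⟨a, ha⟩ := card_pos.mp (by omega : 0 < #{x | (σ x : ℕ) + x = s})
    exact ⟨a, (mem_filter.mp ha).2⟩
  have huniq (hs : (s : ℕ) < n) (x) (hx : (σ x : ℕ) + x = s) : x = a := by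
    have := hcount s (by omega)
    rw [if_pos rfl, if_neg hs.ne, if_neg (by omega)] at this
    exact card_le_one.mp this.le x (by simp [hx]) a (by simp [ha])
  -- `π x - x = n - (σ x + x)` lies in `{n - s, 0, -1}`
  set π := σ.trans Fin.revPerm
  have hπ (x) : (π x : ℕ) = n - σ x := by simp [π, Fin.val_rev]
  have hπσ : σ = π.trans Fin.revPerm := by ext x; simp [π]
  have hπ_eq : π = (Fin.cycleIcc a ⟨a + (n - s), by omega⟩).symm := by
    refine Fin.eq_cycleIcc_symm (Fin.le_def.mpr (by simp)) (Fin.ext (by simp [hπ]; omega))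
      (fun x hx => ?_) ?_
    · rcases hval x with h | h | h
      · obtain hs | hs := lt_or_ge (s : ℕ) n
        · exact absurd (huniq hs x h) hx
        · left; ext; rw [hπ]; omega
      · left; ext; rw [hπ]; omega
      · right; rw [hπ]; omega
    · have := hcount (n + 1) (by omega)
      rw [if_neg (by omega), if_neg (by omega), if_pos rfl, zero_add, zero_add] at this
      simp only [add_tsub_cancel_left]
      rw [← this]
      congr 1
      ext x
      simp only [mem_filter, mem_univ, true_and, hπ]
      omega
  rw [hπσ, hπ_eq, Perm.sign_trans, Perm.sign_symm,
    Fin.sign_cycleIcc_of_le (Fin.le_def.mpr (by simp)), mul_comm]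
  simp

theorem exists_subHankelExponent_eq : ∃ σ : Perm (Fin (n + 1)), IsSubHankelAdmissible σ ∧
    subHankelExponent σ = Finsupp.single s.castSucc 1 + gcdWitnessExponent s := by
  set d : Fin (n + 1) := ⟨n - s, by omega⟩
  set σ := (Fin.cycleRange d).symm.trans Fin.revPerm
  have hzero : ((σ 0 : Fin (n + 1)) : ℕ) + (0 : Fin (n + 1)) = s := by
    simp [σ, d, Fin.val_rev]; omega
  have hsucc (j : Fin n) : (σ j.succ : ℕ) + j.succ = if (j : ℕ) < n - s then n + 1 else n := by
    simp only [σ, Equiv.trans_apply, Fin.cycleRange_symm_succ, Fin.revPerm_apply, Fin.val_rev,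
      Fin.val_succ]
    by_cases hj : (j : ℕ) < n - s
    · rw [Fin.succAbove_of_castSucc_lt _ _ (Fin.lt_def.mpr (by simpa [d] using hj)), if_pos hj,
        Fin.val_castSucc]
      omega
    · rw [Fin.succAbove_of_le_castSucc _ _ (Fin.le_def.mpr (by simp [d]; omega)), if_neg hj,
        Fin.val_succ]
      omega
  have hσ : IsSubHankelAdmissible σ := fun x => by
    cases x using Fin.cases with
    | zero => rw [hzero]; omega
    | succ j => rw [hsucc]; split_ifs <;> omega
  refine ⟨σ, hσ, ?_⟩
  have hidx0 : subHankelIndex σ 0 = s.castSucc := by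
    ext; simp only [subHankelIndex, hzero]; simp
  have hidx (j : Fin n) : subHankelIndex σ j.succ =
      if (j : ℕ) < n - s then Fin.last (n + 1) else (Fin.last n).castSucc := by
    ext; simp only [subHankelIndex, hsucc]; split_ifs <;> simp
  rw [subHankelExponent, Fin.sum_univ_succ, hidx0, gcdWitnessExponent]
  simp only [hidx, apply_ite (Finsupp.single · 1), sum_ite, sum_const, Finsupp.smul_single_one]
  have hlt : #{x : Fin n | (x : ℕ) < n - s} = n - s := by
    rw [Fin.card_filter_val_lt]; omega
  have hge : #{x : Fin n | ¬(x : ℕ) < n - s} = s := by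
    have := card_filter_add_card_filter_not (s := univ) (fun x : Fin n => (x : ℕ) < n - s)
    rw [card_univ, Fintype.card_fin, hlt] at this
    omega
  rw [hlt, hge, add_comm (Finsupp.single _ (n - s))]

variable [CharZero k]

theorem coeff_subHankelDet_ne_zero :
    coeff (Finsupp.single s.castSucc 1 + gcdWitnessExponent s) (subHankelDet k (n + 1)) ≠ 0 := by
  classical
  rw [coeff_subHankelDet, sum_congr rfl fun σ hσ =>
    by rw [sign_eq_of_subHankelExponent_eq s (mem_filter.mp hσ).2.1 (mem_filter.mp hσ).2.2],
    sum_const]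
  obtain ⟨σ, hσ⟩ := exists_subHankelExponent_eq s
  have hcard : #{σ : Perm (Fin (n + 1)) | IsSubHankelAdmissible σ ∧
      subHankelExponent σ = Finsupp.single s.castSucc 1 + gcdWitnessExponent s} ≠ 0 :=
    card_ne_zero_of_mem (by simpa using hσ)
  rcases Int.units_eq_one_or ((-1) ^ (n - s : ℕ) * Perm.sign (Fin.revPerm : Perm (Fin (n + 1))))
    with h | h <;> simp [h, hcard]

theorem coeff_pderiv_subHankelDet_ne_zero [IsDomain k] :
    coeff (gcdWitnessExponent s) (pderiv s.castSucc (subHankelDet k (n + 1))) ≠ 0 := by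
  rw [coeff_pderiv, add_comm (gcdWitnessExponent s)]
  exact mul_ne_zero (coeff_subHankelDet_ne_zero s) (Nat.cast_add_one_ne_zero _)

end GcdWitness

section Gcd

variable {k : Type*} [Field k] [CharZero k] {n : ℕ}

theorem associated_pderiv_zero_subHankelDet :
    Associated (pderiv 0 (subHankelDet k (n + 1))) (X (Fin.last (n + 1)) ^ n) := by
  have hc := coeff_pderiv_subHankelDet_ne_zero (k := k) (0 : Fin (n + 1))
  simp only [gcdWitnessExponent, Fin.val_zero, Finsupp.single_zero, zero_add, tsub_zero,
    Fin.castSucc_zero] at hc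
  rw [pderiv_zero_subHankelDet, ← C_mul_X_pow_eq_monomial]
  exact (associated_isUnit_mul_left_iff (hc.isUnit.map C)).mpr (Associated.refl _)

theorem dvd_X_last_pow_of_dvd_pderiv_subHankelDet {g : MvPolynomial (Fin (n + 1 + 1)) k}
    (s : Fin (n + 1)) (h₀ : g ∣ pderiv 0 (subHankelDet k (n + 1)))
    (hs : g ∣ pderiv s.castSucc (subHankelDet k (n + 1))) :
    g ∣ X (Fin.last (n + 1)) ^ (n - s) := by
  obtain ⟨e, -, hge⟩ := (dvd_prime_pow X_prime n).mp
    (h₀.trans associated_pderiv_zero_subHankelDet.dvd)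
  have hle := X_pow_dvd_iff.mp (hge.symm.dvd.trans hs) _
    (mem_support_iff.mpr (coeff_pderiv_subHankelDet_ne_zero s))
  refine hge.dvd.trans (pow_dvd_pow _ ?_)
  simpa [gcdWitnessExponent] using hle

end Gcd

/-- For `0 ≤ i ≤ r - 1`, the partial derivatives `∂f^{(r)}/∂x_0,…,∂f^{(r)}/∂x_i`
lie in the subring `k[x_{r-i},…,x_r]` and their g.c.d. is `x_r^{r-i-1}`. -/
theorem subHankel_pderiv_vars_and_gcd {k : Type*} [Field k] [CharZero k]
    {r : ℕ} (hr : 2 ≤ r) (i : ℕ) (hi : i ≤ r - 1) :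
    (∀ j : Fin (r + 1), (j : ℕ) ≤ i →
      ∀ m ∈ (MvPolynomial.pderiv j (subHankelDet k r)).vars, r - i ≤ (m : ℕ)) ∧
    (∀ j : Fin (r + 1), (j : ℕ) ≤ i →
      MvPolynomial.X (Fin.last r) ^ (r - i - 1) ∣
        MvPolynomial.pderiv j (subHankelDet k r)) ∧
    (∀ g : MvPolynomial (Fin (r + 1)) k,
      (∀ j : Fin (r + 1), (j : ℕ) ≤ i → g ∣ MvPolynomial.pderiv j (subHankelDet k r)) →
      g ∣ MvPolynomial.X (Fin.last r) ^ (r - i - 1)) := by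
  refine ⟨fun j hj t ht => ?_, fun j hj => ?_, fun g hg => ?_⟩
  · have := sub_le_of_mem_vars_pderiv_subHankelDet ht
    omega
  · exact (pow_dvd_pow _ (by omega)).trans (X_last_pow_dvd_pderiv_subHankelDet j)
  · obtain ⟨n, rfl⟩ : ∃ n, r = n + 1 := ⟨r - 1, by omega⟩
    have := dvd_X_last_pow_of_dvd_pderiv_subHankelDet (⟨i, by omega⟩ : Fin (n + 1))
      (hg 0 (Nat.zero_le i)) (hg _ le_rfl)
    rwa [show n + 1 - i - 1 = n - i by omega]
end

section
/- Let f^{(r)} be the sub-Hankel determinant of order r ≥ 2 in x_0,...,x_r. For each i with 1 ≤ i ≤ r-1, the following linear syzygy among the partial derivatives holds: x_r · ∂f^{(r)}/∂x_i = -Σ_{k=0}^{i-1} ((2i-k)/i) · x_{r-i+k} · ∂f^{(r)}/∂x_k. -/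
open MvPolynomial

open Matrix

lemma Derivation.map_finset_prod' {R A : Type*} [CommRing R] [CommRing A] [Algebra R A]
    (D : Derivation R A A) {ι : Type*} [DecidableEq ι] (s : Finset ι) (f : ι → A) :
    D (∏ x ∈ s, f x) = ∑ x ∈ s, D (f x) * ∏ y ∈ s.erase x, f y := by
  induction s using Finset.induction_on with
  | empty => simp
  | @insert a s ha ih =>
    rw [Finset.prod_insert ha, D.leibniz, smul_eq_mul, smul_eq_mul, ih, Finset.mul_sum,
      Finset.sum_insert ha, Finset.erase_insert ha, add_comm]
    congr 1
    · exact mul_comm _ _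
    refine Finset.sum_congr rfl fun x hx => ?_
    rw [Finset.erase_insert_of_ne (by rintro rfl; exact ha hx),
      Finset.prod_insert (fun h => ha (Finset.mem_of_mem_erase h))]
    ring

lemma Derivation.map_det' {R A : Type*} [CommRing R] [CommRing A] [Algebra R A]
    (D : Derivation R A A) {n : Type*} [DecidableEq n] [Fintype n]
    (M : Matrix n n A) :
    D M.det = ∑ q, (M.updateCol q fun p => D (M p q)).det := by
  calc D M.det
      = ∑ σ : Equiv.Perm n, ∑ q, Equiv.Perm.sign σ •
          (D (M (σ q) q) * ∏ i ∈ Finset.univ.erase q, M (σ i) i) := by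
        rw [Matrix.det_apply, map_sum]
        refine Finset.sum_congr rfl fun σ _ => ?_
        rw [Units.smul_def, map_zsmul, D.map_finset_prod' Finset.univ fun i => M (σ i) i,
          ← Finset.smul_sum]
        simp_rw [Units.smul_def]
    _ = ∑ q, ∑ σ : Equiv.Perm n, Equiv.Perm.sign σ •
          (D (M (σ q) q) * ∏ i ∈ Finset.univ.erase q, M (σ i) i) := Finset.sum_comm
    _ = ∑ q, (M.updateCol q fun p => D (M p q)).det := by
        refine Finset.sum_congr rfl fun q _ => ?_
        rw [Matrix.det_apply]
        refine Finset.sum_congr rfl fun σ _ => ?_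
        congr 1
        rw [← Finset.mul_prod_erase Finset.univ _ (Finset.mem_univ q)]
        congr 1
        · rw [Matrix.updateCol_self]
        · exact Finset.prod_congr rfl fun i hi =>
            (Matrix.updateCol_ne (Finset.ne_of_mem_erase hi)).symm

lemma Derivation.map_det_adjugate {R A : Type*} [CommRing R] [CommRing A] [Algebra R A]
    (D : Derivation R A A) {n : Type*} [DecidableEq n] [Fintype n]
    (M : Matrix n n A) :
    D M.det = ∑ q, ∑ p, M.adjugate q p * D (M p q) := by
  rw [D.map_det' M]
  refine Finset.sum_congr rfl fun q _ => ?_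
  rw [← Matrix.cramer_apply, Matrix.cramer_eq_adjugate_mulVec]
  simp [Matrix.mulVec, dotProduct]

/-- Totalized variable family. -/
noncomputable def shXn (k : Type*) [CommRing k] (r n : ℕ) : MvPolynomial (Fin (r + 1)) k :=
  if h : n < r + 1 then MvPolynomial.X ⟨n, h⟩ else 0

/-- Totalized partial derivatives of the sub-Hankel determinant. -/
noncomputable def shDn (k : Type*) [CommRing k] (r n : ℕ) : MvPolynomial (Fin (r + 1)) k :=
  if h : n < r + 1 then MvPolynomial.pderiv ⟨n, h⟩ (subHankelDet k r) else 0

lemma shXn_eq (k : Type*) [CommRing k] (r n : ℕ) (h : n < r + 1) :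
    shXn k r n = MvPolynomial.X ⟨n, h⟩ := dif_pos h

lemma shDn_eq (k : Type*) [CommRing k] (r n : ℕ) (h : n < r + 1) :
    shDn k r n = MvPolynomial.pderiv ⟨n, h⟩ (subHankelDet k r) := dif_pos h

lemma shDn_sum (k : Type*) [CommRing k] (r n : ℕ) (hn : n < r + 1) :
    shDn k r n = ∑ p : Fin r, ∑ q : Fin r,
      if (p : ℕ) + (q : ℕ) = n then (subHankel k r).adjugate q p else 0 := by
  rw [shDn_eq k r n hn, subHankelDet,
    (MvPolynomial.pderiv (⟨n, hn⟩ : Fin (r + 1))).map_det_adjugate (subHankel k r),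
    Finset.sum_comm]
  refine Finset.sum_congr rfl fun p _ => Finset.sum_congr rfl fun q _ => ?_
  simp only [subHankel, Matrix.of_apply]
  by_cases hc : (p : ℕ) + (q : ℕ) ≤ r
  · rw [dif_pos hc, pderiv_X, Pi.single_apply]
    by_cases he : (p : ℕ) + (q : ℕ) = n
    · rw [if_pos he, if_pos (by exact Fin.ext he), mul_one]
    · rw [if_neg he, if_neg (by intro h; exact he (by simpa [Fin.ext_iff] using h)), mul_zero]
  · rw [dif_neg hc, map_zero, mul_zero, if_neg (by omega)]

/-- The linear syzygy among the partial derivatives of the sub-Hankel determinant: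
for `1 ≤ i ≤ r - 1`,
`x_r ∂f^{(r)}/∂x_i = -Σ_{j=0}^{i-1} ((2i-j)/i) x_{r-i+j} ∂f^{(r)}/∂x_j`. -/
theorem subHankel_linear_syzygy {k : Type*} [Field k] [CharZero k]
    {r : ℕ} (hr : 2 ≤ r) (i : ℕ) (hi1 : 1 ≤ i) (hi2 : i ≤ r - 1) :
    MvPolynomial.X (Fin.last r) *
        MvPolynomial.pderiv (⟨i, by omega⟩ : Fin (r + 1)) (subHankelDet k r)
      = -∑ j : Fin i,
          MvPolynomial.C (((2 * i - (j : ℕ) : ℕ) : k) / (i : k)) *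
            MvPolynomial.X (⟨r - i + (j : ℕ), by have := j.isLt; omega⟩ : Fin (r + 1)) *
            MvPolynomial.pderiv (⟨(j : ℕ), by have := j.isLt; omega⟩ : Fin (r + 1))
              (subHankelDet k r) := by
  set s := r - i with hs
  have hsi : s + i = r := by omega
  set M := subHankel k r with hM
  set A := M.adjugate with hAdef
  have hsym : Mᵀ = M := by
    ext p q
    simp only [hM, subHankel, Matrix.transpose_apply, Matrix.of_apply, Nat.add_comm (q : ℕ) (p : ℕ)]
  have hAsym : ∀ p q : Fin r, A p q = A q p := by
    intro p q
    have h2 : Aᵀ = A := by rw [hAdef, Matrix.adjugate_transpose, hsym]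
    conv_lhs => rw [← h2]
    rw [Matrix.transpose_apply]
  have hMent : ∀ (p : Fin r) (hp : (p : ℕ) < i) (q : Fin r),
      M ⟨(p : ℕ) + s, by omega⟩ q
        = if (p : ℕ) + (q : ℕ) ≤ i then shXn k r (s + ((p : ℕ) + (q : ℕ))) else 0 := by
    intro p hp q
    have hrfl : M ⟨(p : ℕ) + s, by omega⟩ q
        = (if h : ((p : ℕ) + s) + (q : ℕ) ≤ r
          then X ⟨((p : ℕ) + s) + (q : ℕ), Nat.lt_succ_of_le h⟩ else 0) := rfl
    rw [hrfl]
    by_cases hq : (p : ℕ) + (q : ℕ) ≤ i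
    · rw [dif_pos (by omega), if_pos hq, shXn_eq k r _ (by omega)]
      exact congrArg X (Fin.ext (show (p : ℕ) + s + (q : ℕ) = s + ((p : ℕ) + (q : ℕ)) by omega))
    · rw [dif_neg (by omega), if_neg hq]
  have hzero : ∀ p : Fin r, ∀ hp : (p : ℕ) < i,
      ∑ q : Fin r, M ⟨(p : ℕ) + s, by omega⟩ q * A q p = 0 := by
    intro p hp
    have hne : (⟨(p : ℕ) + s, by omega⟩ : Fin r) ≠ p :=
      Fin.ne_of_val_ne (show (p : ℕ) + s ≠ (p : ℕ) by omega)
    have h1 : (M * A) ⟨(p : ℕ) + s, by omega⟩ p = 0 := by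
      rw [hAdef, Matrix.mul_adjugate]
      simp [Matrix.smul_apply, Matrix.one_apply, hne]
    rw [← h1, Matrix.mul_apply]
  have E1 : ∑ p : Fin r, ∑ q : Fin r,
      (if (p : ℕ) < i ∧ (p : ℕ) + (q : ℕ) ≤ i then
        C ((i - (p : ℕ) : ℕ) : k) * shXn k r (s + ((p : ℕ) + (q : ℕ))) * A q p else 0) = 0 := by
    refine Finset.sum_eq_zero fun p _ => ?_
    by_cases hp : (p : ℕ) < i
    · have hterm : ∀ q : Fin r,
          (if (p : ℕ) < i ∧ (p : ℕ) + (q : ℕ) ≤ i then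
            C ((i - (p : ℕ) : ℕ) : k) * shXn k r (s + ((p : ℕ) + (q : ℕ))) * A q p else 0)
          = C ((i - (p : ℕ) : ℕ) : k) * (M ⟨(p : ℕ) + s, by omega⟩ q * A q p) := by
        intro q
        rw [hMent p hp q]
        by_cases hq : (p : ℕ) + (q : ℕ) ≤ i
        · rw [if_pos ⟨hp, hq⟩, if_pos hq]; ring
        · rw [if_neg (fun h => hq h.2), if_neg hq]; ring
      rw [Finset.sum_congr rfl fun q _ => hterm q, ← Finset.mul_sum, hzero p hp, mul_zero]
    · exact Finset.sum_eq_zero fun q _ => if_neg (fun h => hp h.1)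
  have E2 : ∑ p : Fin r, ∑ q : Fin r,
      (if (p : ℕ) + (q : ℕ) ≤ i then
        C ((i - (p : ℕ) : ℕ) : k) * shXn k r (s + ((p : ℕ) + (q : ℕ))) * A q p else 0) = 0 := by
    refine Eq.trans (Finset.sum_congr rfl fun p _ => Finset.sum_congr rfl fun q _ => ?_) E1
    by_cases hp : (p : ℕ) < i
    · by_cases hq : (p : ℕ) + (q : ℕ) ≤ i
      · rw [if_pos hq, if_pos ⟨hp, hq⟩]
      · rw [if_neg hq, if_neg (fun h => hq h.2)]
    · by_cases hq : (p : ℕ) + (q : ℕ) ≤ i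
      · rw [if_pos hq, if_neg (fun h => hp h.1)]
        rw [show i - (p : ℕ) = 0 by omega, Nat.cast_zero, map_zero, zero_mul, zero_mul]
      · rw [if_neg hq, if_neg (fun h => hp h.1)]
  have E2' := E2
  rw [Finset.sum_comm] at E2'
  have E3 : ∑ p : Fin r, ∑ q : Fin r,
      (if (p : ℕ) + (q : ℕ) ≤ i then
        C ((2 * i - ((p : ℕ) + (q : ℕ)) : ℕ) : k) * shXn k r (s + ((p : ℕ) + (q : ℕ)))
          * A q p else 0) = 0 := by
    have step : ∀ p q : Fin r,
        (if (p : ℕ) + (q : ℕ) ≤ i then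
          C ((2 * i - ((p : ℕ) + (q : ℕ)) : ℕ) : k) * shXn k r (s + ((p : ℕ) + (q : ℕ)))
            * A q p else 0)
        = (if (p : ℕ) + (q : ℕ) ≤ i then
            C ((i - (p : ℕ) : ℕ) : k) * shXn k r (s + ((p : ℕ) + (q : ℕ))) * A q p else 0)
          + (if (q : ℕ) + (p : ℕ) ≤ i then
            C ((i - (q : ℕ) : ℕ) : k) * shXn k r (s + ((q : ℕ) + (p : ℕ))) * A p q else 0) := by
      intro p q
      by_cases hq : (p : ℕ) + (q : ℕ) ≤ i
      · rw [if_pos hq, if_pos hq, if_pos (by omega : (q : ℕ) + (p : ℕ) ≤ i), hAsym p q,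
          Nat.add_comm (q : ℕ) (p : ℕ), ← add_mul, ← add_mul, ← C_add, ← Nat.cast_add,
          show i - (p : ℕ) + (i - (q : ℕ)) = 2 * i - ((p : ℕ) + (q : ℕ)) by omega]
      · rw [if_neg hq, if_neg hq, if_neg (by omega : ¬ (q : ℕ) + (p : ℕ) ≤ i), add_zero]
    simp only [step, Finset.sum_add_distrib]
    rw [E2, E2', add_zero]
  have E4 : ∑ n ∈ Finset.range (i + 1),
      C ((2 * i - n : ℕ) : k) * shXn k r (s + n) * shDn k r n = 0 := by
    refine Eq.trans ?_ E3
    calc ∑ n ∈ Finset.range (i + 1), C ((2 * i - n : ℕ) : k) * shXn k r (s + n) * shDn k r n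
        = ∑ n ∈ Finset.range (i + 1), ∑ p : Fin r, ∑ q : Fin r,
            (if (p : ℕ) + (q : ℕ) = n then
              C ((2 * i - n : ℕ) : k) * shXn k r (s + n) * A q p else 0) := by
          refine Finset.sum_congr rfl fun n hn => ?_
          rw [shDn_sum k r n (by rw [Finset.mem_range] at hn; omega), Finset.mul_sum]
          refine Finset.sum_congr rfl fun p _ => ?_
          rw [Finset.mul_sum]
          exact Finset.sum_congr rfl fun q _ => by rw [mul_ite, mul_zero]
      _ = ∑ p : Fin r, ∑ q : Fin r, ∑ n ∈ Finset.range (i + 1),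
            (if (p : ℕ) + (q : ℕ) = n then
              C ((2 * i - n : ℕ) : k) * shXn k r (s + n) * A q p else 0) := by
          rw [Finset.sum_comm]
          exact Finset.sum_congr rfl fun p _ => Finset.sum_comm
      _ = ∑ p : Fin r, ∑ q : Fin r,
            (if (p : ℕ) + (q : ℕ) ≤ i then
              C ((2 * i - ((p : ℕ) + (q : ℕ)) : ℕ) : k) * shXn k r (s + ((p : ℕ) + (q : ℕ)))
                * A q p else 0) := by
          refine Finset.sum_congr rfl fun p _ => Finset.sum_congr rfl fun q _ => ?_
          rw [Finset.sum_ite_eq (Finset.range (i + 1)) ((p : ℕ) + (q : ℕ))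
            (fun n => C ((2 * i - n : ℕ) : k) * shXn k r (s + n) * A q p)]
          simp only [Finset.mem_range, Nat.lt_succ_iff]
  rw [Finset.sum_range_succ, show (2 * i - i : ℕ) = i by omega, hsi] at E4
  have hXlast : shXn k r r = X (Fin.last r) := by
    rw [shXn_eq k r r (by omega)]
    rfl
  have hDi : shDn k r i =
      MvPolynomial.pderiv (⟨i, by omega⟩ : Fin (r + 1)) (subHankelDet k r) :=
    shDn_eq k r i (by omega)
  rw [hXlast, hDi] at E4
  have hik : ((i : ℕ) : k) ≠ 0 := Nat.cast_ne_zero.mpr (by omega)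
  have hCi : (C ((i : ℕ) : k) : MvPolynomial (Fin (r + 1)) k) ≠ 0 := by
    simpa using hik
  refine mul_left_cancel₀ hCi ?_
  have hterm : ∀ j : Fin i,
      C ((i : ℕ) : k) * (C (((2 * i - (j : ℕ) : ℕ) : k) / (i : k)) *
        X (⟨s + (j : ℕ), by have := j.isLt; omega⟩ : Fin (r + 1)) *
        MvPolynomial.pderiv (⟨(j : ℕ), by have := j.isLt; omega⟩ : Fin (r + 1))
          (subHankelDet k r))
      = C ((2 * i - (j : ℕ) : ℕ) : k) * shXn k r (s + (j : ℕ)) * shDn k r (j : ℕ) := by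
    intro j
    rw [shXn_eq k r _ (by have := j.isLt; omega), shDn_eq k r _ (by have := j.isLt; omega),
      ← mul_assoc, ← mul_assoc, ← C_mul, mul_comm ((i : ℕ) : k), div_mul_cancel₀ _ hik]
  rw [mul_neg, Finset.mul_sum, Finset.sum_congr rfl fun j _ => hterm j,
    Fin.sum_univ_eq_sum_range (fun n => C ((2 * i - n : ℕ) : k) * shXn k r (s + n)
      * shDn k r n) i, ← mul_assoc]
  linear_combination E4
end

section
/- Let f^{(r)} be the sub-Hankel determinant of order r ≥ 2 in x_0,...,x_r. Then x_r · ∂f^{(r)}/∂x_r = Σ_{k=0}^{r-2} (r-1-k) · x_k · ∂f^{(r)}/∂x_k. -/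
open MvPolynomial

lemma X_mul_pderiv_monomial' {σ R : Type*} [CommRing R] [DecidableEq σ]
    (i : σ) (d : σ →₀ ℕ) (a : R) :
    X i * pderiv i (monomial d a) = (d i : R) • monomial d a := by
  rw [pderiv_monomial]
  by_cases h : d i = 0
  · simp [h]
  · rw [X, monomial_mul, one_mul]
    have hd : Finsupp.single i 1 + (d - Finsupp.single i 1) = d := by
      ext j
      rcases eq_or_ne j i with rfl | hj
      · simp only [Finsupp.add_apply, Finsupp.single_apply, if_pos rfl, if_true,
          Finsupp.tsub_apply]
        omega
      · simp [Finsupp.single_apply, hj.symm, Finsupp.tsub_apply]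
    rw [hd, smul_monomial]
    congr 1
    rw [smul_eq_mul, mul_comm]

lemma euler_zero {σ R : Type*} [Fintype σ] [DecidableEq σ] [CommRing R] (w : σ → ℤ)
    (f : MvPolynomial σ R) (hf : f.IsWeightedHomogeneous w 0) :
    ∑ i, C ((w i : R)) * X i * pderiv i f = 0 := by
  have hp : ∀ i : σ, pderiv i f = ∑ d ∈ f.support, pderiv i (monomial d (coeff d f)) := by
    intro i
    conv_lhs => rw [f.as_sum]
    rw [map_sum]
  calc ∑ i, C ((w i : R)) * X i * pderiv i f
      = ∑ i, ∑ d ∈ f.support, C ((w i : R)) * (X i * pderiv i (monomial d (coeff d f))) := by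
        simp_rw [hp, Finset.mul_sum, mul_assoc]
    _ = ∑ d ∈ f.support, ∑ i, ((w i * d i : ℤ) : R) • monomial d (coeff d f) := by
        rw [Finset.sum_comm]
        refine Finset.sum_congr rfl fun i _ => Finset.sum_congr rfl fun d _ => ?_
        rw [X_mul_pderiv_monomial', smul_monomial, C_mul_monomial, smul_monomial]
        congr 1
        push_cast [smul_eq_mul]
        ring
    _ = 0 := by
        refine Finset.sum_eq_zero fun d hd => ?_
        rw [← Finset.sum_smul, ← Int.cast_sum]
        have h0 : Finsupp.weight w d = 0 := hf (mem_support_iff.mp hd)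
        have : (∑ i, w i * (d i : ℤ)) = 0 := by
          rw [← h0, Finsupp.weight_apply, Finsupp.sum_fintype]
          · exact Finset.sum_congr rfl fun i _ => by simp [mul_comm]
          · intro i; simp
        rw [this]
        simp

lemma zsmul_homog {σ R M : Type*} [CommRing R] [AddCommMonoid M] {w : σ → M}
    {φ : MvPolynomial σ R} {m : M} (c : ℤ) (h : φ.IsWeightedHomogeneous w m) :
    (c • φ).IsWeightedHomogeneous w m := by
  intro d hd
  apply h
  intro h0
  apply hd
  rw [MvPolynomial.coeff_smul, h0, smul_zero]

lemma subHankelDet_homog (k : Type*) [CommRing k] {r : ℕ} (hr : 1 ≤ r) :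
    (subHankelDet k r).IsWeightedHomogeneous
      (fun j : Fin (r + 1) => ((r : ℕ) : ℤ) - 1 - ((j : ℕ) : ℤ)) 0 := by
  rw [subHankelDet, Matrix.det_apply]
  refine IsWeightedHomogeneous.sum _ _ _ (fun σ _ => ?_)
  rw [Units.smul_def]
  refine zsmul_homog _ ?_
  have key : ∑ i : Fin r, (((r : ℕ) : ℤ) - 1 - (((σ i : ℕ) + (i : ℕ) : ℕ) : ℤ)) = 0 := by
    have h1 : ∑ i : Fin r, ((σ i : ℕ) : ℤ) = ∑ i : Fin r, ((i : ℕ) : ℤ) :=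
      Equiv.sum_comp σ (fun i : Fin r => ((i : ℕ) : ℤ))
    have h2 : (∑ i : Fin r, ((i : ℕ) : ℤ)) * 2 = (r : ℤ) * ((r : ℤ) - 1) := by
      rw [Fin.sum_univ_eq_sum_range (fun i : ℕ => (i : ℤ)) r, ← Nat.cast_sum]
      have h3 := Finset.sum_range_id_mul_two r
      have h4 : (((∑ i ∈ Finset.range r, i) * 2 : ℕ) : ℤ) = ((r * (r - 1) : ℕ) : ℤ) :=
        congrArg (fun n : ℕ => (n : ℤ)) h3
      push_cast [Nat.cast_sub hr] at h4
      push_cast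
      linarith
    have h5 : ∑ i : Fin r, (((r : ℕ) : ℤ) - 1 - (((σ i : ℕ) + (i : ℕ) : ℕ) : ℤ))
        = (r : ℤ) * ((r : ℤ) - 1) - (∑ i : Fin r, ((σ i : ℕ) : ℤ))
          - ∑ i : Fin r, ((i : ℕ) : ℤ) := by
      push_cast
      simp only [Finset.sum_sub_distrib, Finset.sum_add_distrib, Finset.sum_const,
        Finset.card_univ, Fintype.card_fin, nsmul_eq_mul]
      push_cast
      ring
    rw [h5, h1]
    linarith
  rw [← key]
  refine IsWeightedHomogeneous.prod Finset.univ _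
    (fun i : Fin r => (((r : ℕ) : ℤ) - 1 - (((σ i : ℕ) + (i : ℕ) : ℕ) : ℤ))) (fun i _ => ?_)
  rw [subHankel]
  by_cases h : (σ i : ℕ) + (i : ℕ) ≤ r
  · simp only [Matrix.of_apply, dif_pos h]
    exact isWeightedHomogeneous_X k _ _
  · simp only [Matrix.of_apply, dif_neg h]
    exact isWeightedHomogeneous_zero _ _ _

/-- The Euler-type relation for the sub-Hankel determinant (`r ≥ 2`):
`x_r ∂f^{(r)}/∂x_r = Σ_{j=0}^{r-2} (r-1-j) x_j ∂f^{(r)}/∂x_j`. -/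
theorem subHankel_last_relation {k : Type*} [Field k] [CharZero k]
    {r : ℕ} (hr : 2 ≤ r) :
    MvPolynomial.X (Fin.last r) *
        MvPolynomial.pderiv (Fin.last r) (subHankelDet k r)
      = ∑ j : Fin (r - 1),
          MvPolynomial.C ((r - 1 - (j : ℕ) : ℕ) : k) *
            MvPolynomial.X (⟨(j : ℕ), by have := j.isLt; omega⟩ : Fin (r + 1)) *
            MvPolynomial.pderiv (⟨(j : ℕ), by have := j.isLt; omega⟩ : Fin (r + 1))
              (subHankelDet k r) := by
  obtain ⟨m, rfl⟩ : ∃ m, r = m + 2 := ⟨r - 2, by omega⟩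
  have e := euler_zero (R := k)
    (fun j : Fin (m + 2 + 1) => (((m + 2 : ℕ) : ℤ)) - 1 - ((j : ℕ) : ℤ))
    (subHankelDet k (m + 2)) (subHankelDet_homog k (by omega))
  rw [Fin.sum_univ_castSucc, Fin.sum_univ_castSucc] at e
  simp only [Fin.coe_castSucc, Fin.val_last] at e
  have hz : ((((m + 2 : ℕ) : ℤ) - 1 - ((m + 1 : ℕ) : ℤ) : ℤ) : k) = 0 := by push_cast; ring
  have hneg : ((((m + 2 : ℕ) : ℤ) - 1 - ((m + 2 : ℕ) : ℤ) : ℤ) : k) = -1 := by push_cast; ring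
  rw [hz, hneg] at e
  simp only [map_zero, zero_mul, add_zero, map_neg, map_one, neg_mul, one_mul] at e
  show MvPolynomial.X (Fin.last (m + 2)) *
        MvPolynomial.pderiv (Fin.last (m + 2)) (subHankelDet k (m + 2))
      = ∑ j : Fin (m + 1),
          MvPolynomial.C ((m + 1 - (j : ℕ) : ℕ) : k) *
            MvPolynomial.X (⟨(j : ℕ), by omega⟩ : Fin (m + 3)) *
            MvPolynomial.pderiv (⟨(j : ℕ), by omega⟩ : Fin (m + 3))
              (subHankelDet k (m + 2))
  have hsum : ∑ j : Fin (m + 1),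
      MvPolynomial.C ((m + 1 - (j : ℕ) : ℕ) : k) *
        MvPolynomial.X (⟨(j : ℕ), by omega⟩ : Fin (m + 3)) *
        MvPolynomial.pderiv (⟨(j : ℕ), by omega⟩ : Fin (m + 3)) (subHankelDet k (m + 2))
      = ∑ j : Fin (m + 1),
      MvPolynomial.C (((((m + 2 : ℕ) : ℤ) - 1 - ((j : ℕ) : ℤ) : ℤ)) : k) *
        MvPolynomial.X (j.castSucc.castSucc) *
        MvPolynomial.pderiv (j.castSucc.castSucc) (subHankelDet k (m + 2)) := by
    refine Finset.sum_congr rfl fun j _ => ?_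
    have hj : (j.castSucc.castSucc : Fin (m + 3)) = ⟨(j : ℕ), by omega⟩ := rfl
    rw [hj]
    congr 2
    have hjle : (j : ℕ) ≤ m + 1 := by omega
    push_cast [Nat.cast_sub hjle]
    ring
  rw [hsum]
  linear_combination -e
end

section
/- The sub-Hankel determinant f^{(r)}, for r ≥ 2, is an irreducible polynomial in k[x_0,...,x_r]. Indeed f^{(r)} = ±x_r^{r-1} x_0 + g(x_1,...,x_r) where g does not involve x_0, so f^{(r)} is of degree one in x_0 with content 1 over k[x_1,...,x_r]. -/
open MvPolynomial

/-!
Expanding along the first row, `x₀` occurs only in the `(0,0)` entry, whose cofactor is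
anti-triangular with `x_r` on the antidiagonal; hence `f = ±x_r^{r-1} x₀ + g` with `g` free of
`x₀`. As a polynomial in `x₀` over `k[x₁,…,x_r]`, `f` is linear, so it is irreducible once its
two coefficients are coprime. The only prime factor of `±x_r^{r-1}` is `x_r`, and `x_r ∤ g`:
putting `x₀ = x_r = 0` makes the matrix anti-triangular with `x_{r-1}` on the antidiagonal, so
that `g(x_r = 0) = ±x_{r-1}^r ≠ 0`.
-/

namespace Matrix

variable {R : Type*} [CommRing R]

theorem det_of_antitriangular {n : ℕ} (A : Matrix (Fin n) (Fin n) R) (c : R)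
    (h_below : ∀ i j : Fin n, n ≤ (i : ℕ) + j → A i j = 0)
    (h_anti : ∀ i j : Fin n, (i : ℕ) + j + 1 = n → A i j = c) :
    A.det = (Equiv.Perm.sign (Fin.revPerm : Equiv.Perm (Fin n)) : ℤ) * c ^ n := by
  have h_tri : (A.submatrix id Fin.revPerm).BlockTriangular id := by
    intro i j hij
    have : (j : ℕ) < i := hij
    exact h_below _ _ (by simp only [id, Fin.revPerm_apply, Fin.val_rev]; omega)
  have h_rev : (A.submatrix id Fin.revPerm).submatrix id Fin.revPerm = A := by
    ext i j; simp
  rw [← h_rev, det_permute', det_of_isUpperTriangular h_tri]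
  congr 1
  simp only [submatrix_apply, id, Fin.revPerm_apply]
  rw [Finset.prod_congr rfl fun i _ => h_anti i _ (by simp only [Fin.val_rev]; omega)]
  simp

theorem det_eq_mul_det_submatrix_succ_add {n : ℕ} (M M' : Matrix (Fin (n + 1)) (Fin (n + 1)) R)
    (h₀ : M' 0 0 = 0) (h : ∀ i j, (i, j) ≠ (0, 0) → M' i j = M i j) :
    M.det = M 0 0 * (M.submatrix Fin.succ Fin.succ).det + M'.det := by
  have h_rows (f : Fin n → Fin (n + 1)) : M'.submatrix Fin.succ f = M.submatrix Fin.succ f := by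
    ext i j; exact h _ _ (by simp)
  rw [det_succ_row_zero, det_succ_row_zero M', Fin.sum_univ_succ, Fin.sum_univ_succ]
  simp [h₀, h_rows, h 0 (Fin.succ _) (by simp)]

end Matrix

namespace MvPolynomial

theorem finSuccEquiv_rename_succ {R : Type*} [CommRing R] {n : ℕ} (p : MvPolynomial (Fin n) R) :
    finSuccEquiv R n (rename Fin.succ p) = Polynomial.C p := by
  induction p using MvPolynomial.induction_on with
  | C a => simp [finSuccEquiv_apply]
  | add p q hp hq => simp [hp, hq]
  | mul_X p i hp => simp [hp, finSuccEquiv_X_succ]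

theorem irreducible_rename_succ_mul_X_zero_add {R : Type*} [CommRing R] [IsDomain R] {n : ℕ}
    {a b : MvPolynomial (Fin n) R} (ha : a ≠ 0) (hab : IsRelPrime a b) :
    Irreducible (rename Fin.succ a * X 0 + rename Fin.succ b) := by
  rw [← MulEquiv.irreducible_iff (finSuccEquiv R n).toMulEquiv]
  simpa [finSuccEquiv_rename_succ, finSuccEquiv_X_zero] using
    Polynomial.irreducible_C_mul_X_add_C ha hab

end MvPolynomial

open Matrix

theorem subHankel_map_apply {k S : Type*} [CommRing k] [CommRing S] [Algebra k S] {r : ℕ}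
    (φ : MvPolynomial (Fin (r + 1)) k →ₐ[k] S) (i j : Fin r) :
    (subHankel k r).map φ i j =
      if h : (i : ℕ) + j ≤ r then φ (X ⟨i + j, Nat.lt_succ_of_le h⟩) else 0 := by
  simp only [map_apply, subHankel, of_apply]
  split_ifs <;> simp

theorem subHankel_zero_zero (k : Type*) [CommRing k] (n : ℕ) :
    subHankel k (n + 1) 0 0 = X 0 := by
  simp [subHankel]

theorem det_subHankel_submatrix_succ (k : Type*) [CommRing k] (n : ℕ) :
    ((subHankel k (n + 1)).submatrix Fin.succ Fin.succ).det =
      ((Equiv.Perm.sign (Fin.revPerm : Equiv.Perm (Fin n)) : ℤ) : MvPolynomial (Fin (n + 2)) k) *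
        X (Fin.last (n + 1)) ^ n := by
  apply det_of_antitriangular
  · intro i j h
    simp only [submatrix_apply, subHankel, of_apply, Fin.val_succ]
    rw [dif_neg (by omega)]
  · intro i j h
    simp only [submatrix_apply, subHankel, of_apply, Fin.val_succ]
    rw [dif_pos (by omega)]
    congr 1; ext; simp; omega

/-- `aeval (Fin.cons 0 X)` puts `x₀ = 0` and renames `x_{i+1}` to `x_i`, so the second summand is
`f(0, x₁, …, x_r)`. -/
theorem subHankelDet_eq_mul_X_zero_add (k : Type*) [CommRing k] (n : ℕ) :
    subHankelDet k (n + 1) =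
      ((Equiv.Perm.sign (Fin.revPerm : Equiv.Perm (Fin n)) : ℤ) : MvPolynomial (Fin (n + 2)) k) *
        X (Fin.last (n + 1)) ^ n * X 0 +
        rename Fin.succ (aeval (Fin.cons 0 X) (subHankelDet k (n + 1))) := by
  set ψ := (rename (R := k) (Fin.succ : Fin (n + 1) → _)).comp (aeval (Fin.cons 0 X))
  have hψ : ∀ l : Fin (n + 2), ψ (X l) = if l = 0 then 0 else X l := by
    intro l
    cases l using Fin.cases <;> simp [ψ]
  have h := det_eq_mul_det_submatrix_succ_add (subHankel k (n + 1))
    ((subHankel k (n + 1)).map ψ) ?_ ?_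
  · conv_lhs => rw [subHankelDet, h, det_subHankel_submatrix_succ, ← AlgHom.mapMatrix_apply,
      ← AlgHom.map_det]
    simp only [subHankel_zero_zero]
    congr 1
    ring
  · simp [subHankel_zero_zero, hψ]
  · intro i j hij
    rw [subHankel_map_apply]
    simp only [subHankel, of_apply]
    split_ifs with h1
    · rw [hψ, if_neg]
      intro h0
      simp only [Fin.ext_iff, Fin.val_zero] at h0
      exact hij (by simp only [Prod.mk.injEq, Fin.ext_iff, Fin.val_zero]; omega)
    · rfl

theorem not_X_last_dvd_aeval_subHankelDet (k : Type*) [CommRing k] [Nontrivial k] (n : ℕ) :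
    ¬ (X (Fin.last (n + 1)) : MvPolynomial (Fin (n + 2)) k) ∣
      aeval (Fin.cons 0 X) (subHankelDet k (n + 2)) := by
  set χ : MvPolynomial (Fin (n + 2)) k →ₐ[k] MvPolynomial (Fin (n + 2)) k :=
    aeval (Function.update X (Fin.last (n + 1)) 0)
  set φ := χ.comp (aeval (Fin.cons 0 X))
  have hφ (l : Fin (n + 2)) : φ (X l.succ) = if l = Fin.last (n + 1) then 0 else X l := by
    by_cases hl : l = Fin.last (n + 1) <;> simp [φ, χ, hl]
  have h_det : ((subHankel k (n + 2)).map φ).det =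
      ((Equiv.Perm.sign (Fin.revPerm : Equiv.Perm (Fin (n + 2))) : ℤ) :
        MvPolynomial (Fin (n + 2)) k) * X ⟨n, by omega⟩ ^ (n + 2) := by
    apply det_of_antitriangular
    · intro i j h
      rw [subHankel_map_apply]
      split_ifs with h'
      · rw [show (⟨i + j, _⟩ : Fin (n + 3)) = (Fin.last (n + 1)).succ from
          Fin.ext (by simp; omega), hφ, if_pos rfl]
      · rfl
    · intro i j h
      rw [subHankel_map_apply, dif_pos (by omega),
        show (⟨i + j, _⟩ : Fin (n + 3)) = (⟨n, by omega⟩ : Fin (n + 2)).succ from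
          Fin.ext (by simp; omega), hφ, if_neg (by simp [Fin.ext_iff])]
  rintro ⟨q, hq⟩
  have h_zero : ((subHankel k (n + 2)).map φ).det = 0 := by
    rw [← AlgHom.mapMatrix_apply, ← AlgHom.map_det, AlgHom.comp_apply]
    change χ (aeval (Fin.cons 0 X) (subHankelDet k (n + 2))) = 0
    rw [hq, map_mul, aeval_X, Function.update_self, zero_mul]
  rw [h_det] at h_zero
  rcases Int.units_eq_one_or (Equiv.Perm.sign (Fin.revPerm : Equiv.Perm (Fin (n + 2)))) with
    h | h <;> simp [h, X_pow_eq_monomial] at h_zero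

theorem zero_notMem_vars_rename_succ {R : Type*} [CommSemiring R] {n : ℕ}
    (p : MvPolynomial (Fin n) R) : (0 : Fin (n + 1)) ∉ (rename Fin.succ p).vars := by
  intro h
  obtain ⟨i, -, hi⟩ := Finset.mem_image.mp (vars_rename Fin.succ p h)
  exact Fin.succ_ne_zero i hi

theorem subHankel_irreducible_general {k : Type*} [Field k]
    {r : ℕ} (hr : 2 ≤ r) :
    Irreducible (subHankelDet k r) ∧
    ∃ ε : k, (ε = 1 ∨ ε = -1) ∧
      ∃ g : MvPolynomial (Fin (r + 1)) k, (0 : Fin (r + 1)) ∉ g.vars ∧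
        subHankelDet k r
          = MvPolynomial.C ε * MvPolynomial.X (Fin.last r) ^ (r - 1) *
              MvPolynomial.X (0 : Fin (r + 1)) + g := by
  obtain ⟨n, rfl⟩ : ∃ n, r = n + 2 := ⟨r - 2, by omega⟩
  set ε : k := ((Equiv.Perm.sign (Fin.revPerm : Equiv.Perm (Fin (n + 1))) : ℤ) : k)
  set B : MvPolynomial (Fin (n + 2)) k := aeval (Fin.cons 0 X) (subHankelDet k (n + 2))
  have hε : ε = 1 ∨ ε = -1 := by
    rcases Int.units_eq_one_or (Equiv.Perm.sign (Fin.revPerm : Equiv.Perm (Fin (n + 1)))) with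
      h | h <;> simp [ε, h]
  have h_eq : subHankelDet k (n + 2) =
      C ε * X (Fin.last (n + 2)) ^ (n + 1) * X 0 + rename Fin.succ B := by
    rw [subHankelDet_eq_mul_X_zero_add k (n + 1),
      ← map_intCast (C : k →+* MvPolynomial (Fin (n + 3)) k)]
  refine ⟨?_, ε, hε, rename Fin.succ B, zero_notMem_vars_rename_succ B, h_eq⟩
  have h_unit : IsUnit (C ε : MvPolynomial (Fin (n + 2)) k) := by
    rcases hε with h | h <;> simp [h]
  have h_lead : C ε * X (Fin.last (n + 2)) ^ (n + 1) =
      rename Fin.succ (C ε * X (Fin.last (n + 1)) ^ (n + 1)) := by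
    simp [Fin.succ_last]
  rw [h_eq, h_lead]
  apply irreducible_rename_succ_mul_X_zero_add
  · exact mul_ne_zero h_unit.ne_zero (pow_ne_zero _ (X_ne_zero _))
  · rw [isRelPrime_mul_unit_left_left h_unit]
    exact (X_prime.irreducible.isRelPrime_iff_not_dvd.mpr
      (not_X_last_dvd_aeval_subHankelDet k n)).pow_left

/-- The sub-Hankel determinant `f^{(r)}` is irreducible for `r ≥ 2`; indeed
`f^{(r)} = ± x_r^{r-1} x_0 + g(x_1,…,x_r)` with `g` not involving `x_0`. -/
theorem subHankel_irreducible {k : Type*} [Field k] [CharZero k]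
    {r : ℕ} (hr : 2 ≤ r) :
    Irreducible (subHankelDet k r) ∧
    ∃ ε : k, (ε = 1 ∨ ε = -1) ∧
      ∃ g : MvPolynomial (Fin (r + 1)) k, (0 : Fin (r + 1)) ∉ g.vars ∧
        subHankelDet k r
          = MvPolynomial.C ε * MvPolynomial.X (Fin.last r) ^ (r - 1) *
              MvPolynomial.X (0 : Fin (r + 1)) + g :=
  subHankel_irreducible_general hr
end

section
/- Laplace expansion of the sub-Hankel determinant along the first row: for r ≥ 2, f^{(r)} = -ξ(r) Σ_{j=0}^{r-1} ξ(j) x_j x_r^{r-j-1} φ^{(j)}, where φ^{(j)} = f^{(j)}(x_{r-j},...,x_r) is the sub-Hankel determinant of order j in the last j+1 variables, and ξ is the sign function with ξ(m) = 1 if m ≡ 1,2 (mod 4) and ξ(m) = -1 if m ≡ 0,3 (mod 4). -/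
open MvPolynomial

/-- The sign function `ξ`: `ξ(m) = 1` if `m ≡ 1, 2 (mod 4)` and `ξ(m) = -1`
if `m ≡ 0, 3 (mod 4)`. -/
def xiSign (m : ℕ) : ℤ := if m % 4 = 1 ∨ m % 4 = 2 then 1 else -1

/-! ### Auxiliary machinery -/

/-- `XX k r a` is the variable `x_a` if `a ≤ r` and `0` otherwise. -/
noncomputable def XX (k : Type*) [CommRing k] (r a : ℕ) : MvPolynomial (Fin (r + 1)) k :=
  if h : a ≤ r then MvPolynomial.X ⟨a, Nat.lt_succ_of_le h⟩ else 0

lemma XX_of_le (k : Type*) [CommRing k] (r a : ℕ) (h : a ≤ r) :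
    XX k r a = MvPolynomial.X ⟨a, Nat.lt_succ_of_le h⟩ := dif_pos h

lemma XX_of_gt (k : Type*) [CommRing k] (r a : ℕ) (h : r < a) :
    XX k r a = 0 := dif_neg (by omega)

lemma subHankel_apply (k : Type*) [CommRing k] (r : ℕ) (i j : Fin r) :
    subHankel k r i j = XX k r ((i : ℕ) + (j : ℕ)) := rfl

/-- The auxiliary matrices appearing in the iterated expansion:
rows shifted by `s`, column `t` of the original matrix deleted. -/
noncomputable def Nmat (k : Type*) [CommRing k] (r s t q : ℕ) :
    Matrix (Fin q) (Fin q) (MvPolynomial (Fin (r + 1)) k) :=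
  Matrix.of fun i c =>
    if (c : ℕ) < t then XX k r (s + (i : ℕ) + (c : ℕ)) else XX k r (s + (i : ℕ) + (c : ℕ) + 1)

lemma Nmat_apply (k : Type*) [CommRing k] (r s t q : ℕ) (i c : Fin q) :
    Nmat k r s t q i c =
      if (c : ℕ) < t then XX k r (s + (i : ℕ) + (c : ℕ))
      else XX k r (s + (i : ℕ) + (c : ℕ) + 1) := rfl

/-- The sign accumulated along the iterated expansion. -/
def epsSign (t : ℕ) : ℕ → ℤ
  | 0 => 1
  | n + 1 => (-1) ^ (t + n) * epsSign t n

lemma xiSign_sq (a : ℕ) : xiSign a * xiSign a = 1 := by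
  unfold xiSign; split <;> norm_num

lemma xiSign_succ_mul (a : ℕ) : xiSign (a + 1) * xiSign a = (-1 : ℤ) ^ (a + 1) := by
  rcases (by omega : a % 4 = 0 ∨ a % 4 = 1 ∨ a % 4 = 2 ∨ a % 4 = 3) with h | h | h | h
  · have h1 : (a + 1) % 4 = 1 := by omega
    have hp : Odd (a + 1) := by rw [Nat.odd_iff]; omega
    simp [xiSign, h, h1, hp.neg_one_pow]
  · have h1 : (a + 1) % 4 = 2 := by omega
    have hp : Even (a + 1) := by rw [Nat.even_iff]; omega
    simp [xiSign, h, h1, hp.neg_one_pow]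
  · have h1 : (a + 1) % 4 = 3 := by omega
    have hp : Odd (a + 1) := by rw [Nat.odd_iff]; omega
    simp [xiSign, h, h1, hp.neg_one_pow]
  · have h1 : (a + 1) % 4 = 0 := by omega
    have hp : Even (a + 1) := by rw [Nat.even_iff]; omega
    simp [xiSign, h, h1, hp.neg_one_pow]

lemma epsSign_key (t n : ℕ) :
    (-1 : ℤ) ^ t * epsSign t n = -(xiSign (t + n + 1) * xiSign t) := by
  induction n with
  | zero =>
    simp only [epsSign, mul_one, Nat.add_zero]
    rw [xiSign_succ_mul, pow_succ]
    ring
  | succ n ih =>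
    have h3 : xiSign (t + n + 1 + 1) = (-1 : ℤ) ^ (t + n) * xiSign (t + n + 1) := by
      calc xiSign (t + n + 1 + 1)
          = xiSign (t + n + 1 + 1) * (xiSign (t + n + 1) * xiSign (t + n + 1)) := by
            rw [xiSign_sq, mul_one]
        _ = (-1 : ℤ) ^ (t + n + 1 + 1) * xiSign (t + n + 1) := by
            rw [← mul_assoc, xiSign_succ_mul]
        _ = (-1 : ℤ) ^ (t + n) * xiSign (t + n + 1) := by
            rw [pow_succ, pow_succ]; ring
    show (-1 : ℤ) ^ t * ((-1) ^ (t + n) * epsSign t n) = -(xiSign (t + n + 1 + 1) * xiSign t)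
    rw [h3]
    linear_combination (-1 : ℤ) ^ (t + n) * ih

lemma Nmat_base (k : Type*) [CommRing k] (r s t : ℕ) (hst : s + t = r) :
    (Nmat k r s t t).det
      = MvPolynomial.rename
          (fun m' : Fin (t + 1) => (⟨s + (m' : ℕ), by have := m'.isLt; omega⟩ : Fin (r + 1)))
          (subHankelDet k t) := by
  unfold subHankelDet
  rw [AlgHom.map_det (MvPolynomial.rename (R := k)
    (fun m' : Fin (t + 1) => (⟨s + (m' : ℕ), by have := m'.isLt; omega⟩ : Fin (r + 1))))
    (subHankel k t)]
  congr 1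
  ext i c
  rw [AlgHom.mapMatrix_apply, Matrix.map_apply, subHankel_apply, Nmat_apply, if_pos c.isLt]
  rcases le_or_gt ((i : ℕ) + (c : ℕ)) t with h1 | h1
  · rw [XX_of_le k t _ h1, XX_of_le k r _ (by omega), rename_X]
    have hv : (⟨s + ((i : ℕ) + (c : ℕ)), by omega⟩ : Fin (r + 1))
        = ⟨s + (i : ℕ) + (c : ℕ), by omega⟩ :=
      Fin.ext (Nat.add_assoc s (i : ℕ) (c : ℕ)).symm
    exact congrArg _ (congrArg MvPolynomial.X hv.symm)
  · rw [XX_of_gt k t _ h1, XX_of_gt k r _ (by omega), map_zero]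

lemma Nmat_step (k : Type*) [CommRing k] (r s t q : ℕ) (ht : t ≤ q) (hsq : s + q + 1 = r) :
    (Nmat k r s t (q + 1)).det
      = (-1 : MvPolynomial (Fin (r + 1)) k) ^ q * MvPolynomial.X (Fin.last r) *
          (Nmat k r (s + 1) t q).det := by
  have hsub : (Nmat k r s t (q + 1)).submatrix (0 : Fin (q + 1)).succAbove
      (Fin.last q).succAbove = Nmat k r (s + 1) t q := by
    ext i c
    rw [Matrix.submatrix_apply, Fin.zero_succAbove, Fin.succAbove_last, Nmat_apply, Nmat_apply,
      Fin.val_succ, Fin.coe_castSucc]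
    by_cases hc : (c : ℕ) < t
    · rw [if_pos hc, if_pos hc,
        show s + ((i : ℕ) + 1) + (c : ℕ) = s + 1 + (i : ℕ) + (c : ℕ) from by omega]
    · rw [if_neg hc, if_neg hc,
        show s + ((i : ℕ) + 1) + (c : ℕ) + 1 = s + 1 + (i : ℕ) + (c : ℕ) + 1 from by omega]
  have h00 : Nmat k r s t (q + 1) 0 (Fin.last q) = MvPolynomial.X (Fin.last r) := by
    rw [Nmat_apply, Fin.val_last, if_neg (by omega), Fin.val_zero,
      XX_of_le k r _ (by omega : s + 0 + q + 1 ≤ r)]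
    exact congrArg MvPolynomial.X (Fin.ext (by show s + 0 + q + 1 = r; omega))
  rw [Matrix.det_succ_column (Nmat k r s t (q + 1)) (Fin.last q)]
  rw [Finset.sum_eq_single (0 : Fin (q + 1))]
  · rw [h00, hsub, Fin.val_zero, Fin.val_last, zero_add]
  · intro i _ hi
    have hvi : 0 < (i : ℕ) := by
      rcases Nat.eq_zero_or_pos (i : ℕ) with h | h
      · exact absurd (Fin.ext h : i = 0) hi
      · exact h
    have hz : Nmat k r s t (q + 1) i (Fin.last q) = 0 := by
      rw [Nmat_apply, Fin.val_last, if_neg (by omega), XX_of_gt k r _ (by omega)]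
    rw [hz, mul_zero, zero_mul]
  · intro h; exact absurd (Finset.mem_univ 0) h

lemma Nmat_iter (k : Type*) [CommRing k] (r t : ℕ) :
    ∀ q s, ∀ _ : t ≤ q, ∀ _ : s + q = r,
      (Nmat k r s t q).det
        = ((epsSign t (q - t) : ℤ) : MvPolynomial (Fin (r + 1)) k)
            * MvPolynomial.X (Fin.last r) ^ (q - t)
            * MvPolynomial.rename
                (fun m' : Fin (t + 1) =>
                  (⟨r - t + (m' : ℕ), by have := m'.isLt; omega⟩ : Fin (r + 1)))
                (subHankelDet k t) := by
  intro q
  induction q with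
  | zero =>
    intro s ht hs
    have ht0 : t = 0 := by omega
    subst ht0
    rw [Nmat_base k r s 0 (by omega)]
    simp only [Nat.sub_zero, epsSign, Int.cast_one, pow_zero, one_mul, mul_one]
    refine congrArg (fun f => MvPolynomial.rename f (subHankelDet k 0)) (funext fun m' => Fin.ext ?_)
    show s + (m' : ℕ) = r - 0 + (m' : ℕ)
    omega
  | succ q ih =>
    intro s ht hs
    rcases eq_or_lt_of_le ht with heq | hlt
    · subst heq
      rw [Nmat_base k r s (q + 1) hs]
      rw [show q + 1 - (q + 1) = 0 from by omega]
      simp only [epsSign, Int.cast_one, pow_zero, one_mul, mul_one]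
      refine congrArg (fun f => MvPolynomial.rename f (subHankelDet k (q + 1)))
        (funext fun m' => Fin.ext ?_)
      show s + (m' : ℕ) = r - (q + 1) + (m' : ℕ)
      omega
    · have ht' : t ≤ q := by omega
      rw [Nmat_step k r s t q ht' (by omega), ih (s + 1) ht' (by omega)]
      rw [show q + 1 - t = (q - t) + 1 from by omega]
      simp only [epsSign]
      push_cast
      rw [show t + (q - t) = q from by omega]
      ring

/-- Laplace expansion of the sub-Hankel determinant along the first row:
`f^{(r)} = -ξ(r) Σ_{j=0}^{r-1} ξ(j) x_j x_r^{r-j-1} φ^{(j)}`, where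
`φ^{(j)} = f^{(j)}(x_{r-j},…,x_r)`. -/
theorem subHankel_laplace_first_row {k : Type*} [Field k] [CharZero k]
    {r : ℕ} (hr : 2 ≤ r) :
    subHankelDet k r
      = -(xiSign r : MvPolynomial (Fin (r + 1)) k) *
          ∑ j : Fin r,
            (xiSign (j : ℕ) : MvPolynomial (Fin (r + 1)) k) *
              MvPolynomial.X (Fin.castSucc j) *
              MvPolynomial.X (Fin.last r) ^ (r - (j : ℕ) - 1) *
              MvPolynomial.rename
                (fun m : Fin ((j : ℕ) + 1) =>
                  (⟨r - (j : ℕ) + (m : ℕ), by have := m.isLt; have := j.isLt; omega⟩ :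
                    Fin (r + 1)))
                (subHankelDet k (j : ℕ)) := by
  obtain ⟨m, rfl⟩ : ∃ m, r = m + 2 := ⟨r - 2, by omega⟩
  rw [show subHankelDet k (m + 2) = (subHankel k (m + 2)).det from rfl,
      Matrix.det_succ_row_zero, Finset.mul_sum]
  refine Finset.sum_congr rfl fun j _ => ?_
  have hjv : (j : ℕ) < m + 2 := j.isLt
  have h0j : subHankel k (m + 2) 0 j = MvPolynomial.X (Fin.castSucc j) := by
    rw [subHankel_apply, Fin.val_zero, XX_of_le k (m + 2) _ (by omega)]
    exact congrArg MvPolynomial.X (Fin.ext (by show 0 + (j : ℕ) = (j : ℕ); omega))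
  have hminor : (subHankel k (m + 2)).submatrix Fin.succ j.succAbove
      = Nmat k (m + 2) 1 (j : ℕ) (m + 1) := by
    ext i c
    rw [Matrix.submatrix_apply, subHankel_apply, Nmat_apply, Fin.val_succ]
    rcases lt_or_ge ((c : ℕ)) ((j : ℕ)) with hc | hc
    · rw [if_pos hc]
      have hsa : ((j.succAbove c : Fin (m + 2)) : ℕ) = (c : ℕ) := by
        rw [Fin.succAbove_of_castSucc_lt _ _ (by rw [Fin.lt_def]; exact hc)]
        rfl
      rw [hsa, show (i : ℕ) + 1 + (c : ℕ) = 1 + (i : ℕ) + (c : ℕ) from by omega]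
    · rw [if_neg (by omega)]
      have hsa : ((j.succAbove c : Fin (m + 2)) : ℕ) = (c : ℕ) + 1 := by
        rw [Fin.succAbove_of_le_castSucc _ _ (by rw [Fin.le_def]; exact hc)]
        rfl
      rw [hsa, show (i : ℕ) + 1 + ((c : ℕ) + 1) = 1 + (i : ℕ) + (c : ℕ) + 1 from by omega]
  rw [h0j, hminor, Nmat_iter k (m + 2) (j : ℕ) (m + 1) 1 (by omega) (by omega)]
  have hsign := epsSign_key (j : ℕ) (m + 1 - (j : ℕ))
  rw [show (j : ℕ) + (m + 1 - (j : ℕ)) + 1 = m + 2 from by omega] at hsign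
  have h2 : (-1 : MvPolynomial (Fin (m + 2 + 1)) k) ^ (j : ℕ)
      * ((epsSign (j : ℕ) (m + 1 - (j : ℕ)) : ℤ) : MvPolynomial (Fin (m + 2 + 1)) k)
      = -((xiSign (m + 2) : MvPolynomial (Fin (m + 2 + 1)) k)
          * (xiSign (j : ℕ) : MvPolynomial (Fin (m + 2 + 1)) k)) := by
    have hc := congrArg (fun z : ℤ => (z : MvPolynomial (Fin (m + 2 + 1)) k)) hsign
    push_cast at hc
    exact hc
  rw [show m + 2 - (j : ℕ) - 1 = m + 1 - (j : ℕ) from by omega]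
  linear_combination (MvPolynomial.X (Fin.castSucc j)
      * MvPolynomial.X (Fin.last (m + 2)) ^ (m + 1 - (j : ℕ))
      * MvPolynomial.rename
          (fun m' : Fin ((j : ℕ) + 1) =>
            (⟨m + 2 - (j : ℕ) + (m' : ℕ), by have := m'.isLt; have := j.isLt; omega⟩ :
              Fin (m + 2 + 1)))
          (subHankelDet k (j : ℕ))) * h2
end

section
/- Let V(f) ⊂ P^r be a hypersurface, let p be a point of V(f), and suppose there exist s linearly independent hyperplanes H_1,...,H_s through p such that for each i the restriction of f to H_i has multiplicity at least s at p. Then f has multiplicity at least s at p (i.e., all terms of the Taylor expansion of f at p of degree less than s vanish). -/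
/-!
A monomial of degree `m < s ≤ n` misses one of the first `s` variables, say `x_i`. Setting
`x_i = 0` does not change its coefficient, which therefore vanishes by the hypothesis on the
hyperplane `x_i = 0`.
-/

open MvPolynomial

section

variable {R σ : Type*} [CommSemiring R] [DecidableEq σ]

lemma aeval_ite_X_zero_monomial (i : σ) (u : σ →₀ ℕ) (a : R) :
    aeval (fun j => if j = i then (0 : MvPolynomial σ R) else X j) (monomial u a) =
      if u i = 0 then monomial u a else 0 := by
  rw [aeval_monomial, algebraMap_eq]
  split_ifs with hu
  · rw [monomial_eq]
    congr 1
    refine Finsupp.prod_congr fun j hj => ?_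
    rw [if_neg (ne_of_mem_of_not_mem hj (Finsupp.notMem_support_iff.mpr hu))]
  · exact mul_eq_zero_of_right _ <|
      Finset.prod_eq_zero (Finsupp.mem_support_iff.mpr hu) (by simp [zero_pow hu])

lemma coeff_aeval_ite_X_zero (i : σ) (f : MvPolynomial σ R) {d : σ →₀ ℕ} (hd : d i = 0) :
    coeff d (aeval (fun j => if j = i then (0 : MvPolynomial σ R) else X j) f) = coeff d f := by
  induction f using MvPolynomial.induction_on' with
  | monomial u a =>
    rw [aeval_ite_X_zero_monomial]
    split_ifs with hu
    · rfl
    · rw [coeff_zero, coeff_monomial, if_neg (by rintro rfl; exact hu hd)]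
  | add p q hp hq => rw [map_add, coeff_add, coeff_add, hp, hq]

end

lemma Finsupp.exists_mem_apply_eq_zero_of_degree_lt {σ : Type*} {d : σ →₀ ℕ} {t : Finset σ}
    (h : d.degree < t.card) : ∃ i ∈ t, d i = 0 := by
  by_contra! hne
  have hsub : t ⊆ d.support := fun i hi => Finsupp.mem_support_iff.mpr (hne i hi)
  have : d.support.card ≤ d.degree := by
    rw [Finsupp.degree_apply, Finset.card_eq_sum_ones]
    exact Finset.sum_le_sum fun i hi => Nat.one_le_iff_ne_zero.mpr (Finsupp.mem_support_iff.mp hi)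
  exact absurd (Finset.card_le_card hsub) (by omega)

theorem mult_ge_of_hyperplane_sections_general {k : Type*} [Field k]
    {n s : ℕ} (hs : s ≤ n) (f : MvPolynomial (Fin n) k)
    (hyp : ∀ i : Fin n, (i : ℕ) < s → ∀ m : ℕ, m < s →
      MvPolynomial.homogeneousComponent m
        (MvPolynomial.aeval
          (fun j : Fin n => if j = i then (0 : MvPolynomial (Fin n) k) else MvPolynomial.X j) f) = 0) :
    ∀ m : ℕ, m < s → MvPolynomial.homogeneousComponent m f = 0 := by
  intro m hm
  ext d
  rw [coeff_homogeneousComponent, coeff_zero]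
  split_ifs with hdeg
  · have hcard : d.degree < (Finset.univ.filter fun i : Fin n => (i : ℕ) < s).card := by
      rw [Fin.card_filter_val_lt, min_eq_right hs, hdeg]; exact hm
    obtain ⟨i, his, hdi⟩ := Finsupp.exists_mem_apply_eq_zero_of_degree_lt hcard
    have hsection := congrArg (coeff d) (hyp i (Finset.mem_filter.mp his).2 m hm)
    rwa [coeff_homogeneousComponent, if_pos hdeg, coeff_aeval_ite_X_zero i f hdi, coeff_zero]
      at hsection
  · rfl

/-- If a polynomial `f`, in affine coordinates centered at the point `p` (taken to
be the origin), restricts to each of the `s` linearly independent coordinate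
hyperplanes `x_i = 0` (`i < s`) with multiplicity at least `s` at the origin, then
`f` itself has multiplicity at least `s` at the origin: all homogeneous components
of `f` of degree less than `s` vanish. -/
theorem mult_ge_of_hyperplane_sections {k : Type*} [Field k] [IsAlgClosed k] [CharZero k]
    {n s : ℕ} (hs : s ≤ n) (f : MvPolynomial (Fin n) k)
    (hyp : ∀ i : Fin n, (i : ℕ) < s → ∀ m : ℕ, m < s →
      MvPolynomial.homogeneousComponent m
        (MvPolynomial.aeval
          (fun j : Fin n => if j = i then (0 : MvPolynomial (Fin n) k) else MvPolynomial.X j) f) = 0) :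
    ∀ m : ℕ, m < s → MvPolynomial.homogeneousComponent m f = 0 :=
  mult_ge_of_hyperplane_sections_general hs f hyp
end
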